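/- arXiv:2111.07474 — 3 statements merged into one kernel-verified Lean document; each statement's English description precedes it below -/
import Mathlib

section
/- For every subset S ⊆ U with signature x with respect to the partition P = (P_1,…,P_r), the rank of S in M_even satisfies rk_{M_even}(S) = Σ_{i=1}^{r} x_i − max(0, max_{even a, 1 ≤ a ≤ r} ℓ_a(x)). -/
/-- Independence in the nested matroid defined by a partition `Q 1, …, Q m` and integer
thresholds `σ 1, …, σ m`: a set `I` is independent iff
`Σ_{s=t}^m |I ∩ Q s| ≤ Σ_{s=t}^m σ s` for all `1 ≤ t ≤ m`. -/
def NIndep {α : Type*} [DecidableEq α] (m : ℕ) (Q : ℕ → Finset α) (σ : ℕ → ℤ)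
    (I : Finset α) : Prop :=
  ∀ t ∈ Finset.Icc 1 m,
    (∑ s ∈ Finset.Icc t m, ((I ∩ Q s).card : ℤ)) ≤ ∑ s ∈ Finset.Icc t m, σ s

/-- The rank of `S` with respect to an independence predicate: the maximum cardinality of
an independent subset of `S`. -/
noncomputable def nrank {α : Type*} (pred : Finset α → Prop) (S : Finset α) : ℕ :=
  sSup {c : ℕ | ∃ I : Finset α, I ⊆ S ∧ pred I ∧ I.card = c}

/-- `B` is a base (maximal independent set) for the independence predicate `pred`. -/
def IsNBase {α : Type*} (pred : Finset α → Prop) (B : Finset α) : Prop :=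
  pred B ∧ ∀ B' : Finset α, pred B' → B ⊆ B' → B' = B

/-- The thresholds `τ_1 = ⋯ = τ_{r−1} = n/2 − g` and `τ_r = n/2 − g + gr/4`, for
`r = 2k+1`. -/
def tauF (n g k : ℕ) : ℕ → ℤ :=
  fun t => if t = 2 * k + 1 then (n : ℤ) / 2 - (g : ℤ) + ((g : ℤ) * (2 * (k : ℤ) + 1)) / 4
    else (n : ℤ) / 2 - (g : ℤ)

/-- `θ = n/2 − g/4`. -/
def thetaF (n g : ℕ) : ℤ := (n : ℤ) / 2 - (g : ℤ) / 4

/-- `ℓ_t(x) = Σ_{s=t}^{2k+1} (x_s − τ_s)`. -/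
def ellT (n g k : ℕ) (x : ℕ → ℤ) (t : ℕ) : ℤ :=
  ∑ s ∈ Finset.Icc t (2 * k + 1), (x s - tauF n g k s)

/-- The signature of `S` with respect to the partition `P`. -/
def sigF {α : Type*} [DecidableEq α] (P : ℕ → Finset α) (S : Finset α) : ℕ → ℤ :=
  fun j => ((S ∩ P j).card : ℤ)

/-- The partition of `M_odd`: `(P_1 ∪ P_2, P_3 ∪ P_4, …, P_{r−2} ∪ P_{r−1}, P_r)`,
indexed `1, …, k+1`. -/
def QoddF {α : Type*} [DecidableEq α] (P : ℕ → Finset α) (k : ℕ) : ℕ → Finset α :=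
  fun j => if j ≤ k then P (2 * j - 1) ∪ P (2 * j) else P (2 * k + 1)

/-- The thresholds of `M_odd`: `(τ_1 + τ_2, τ_3 + τ_4, …, τ_{r−2} + τ_{r−1}, τ_r)`. -/
def soddF (n g k : ℕ) : ℕ → ℤ :=
  fun j => if j ≤ k then tauF n g k (2 * j - 1) + tauF n g k (2 * j)
    else tauF n g k (2 * k + 1)

/-- The partition of `M_even`: `(P_1, P_2 ∪ P_3, P_4 ∪ P_5, …, P_{r−1} ∪ P_r)`,
indexed `1, …, k+1`. -/
def QevenF {α : Type*} [DecidableEq α] (P : ℕ → Finset α) (k : ℕ) : ℕ → Finset α :=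
  fun j => if j = 1 then P 1 else P (2 * j - 2) ∪ P (2 * j - 1)

/-- The thresholds of `M_even`: `(n, τ_2 + τ_3, τ_4 + τ_5, …, τ_{r−1} + τ_r)`. -/
def sevenF (n g k : ℕ) : ℕ → ℤ :=
  fun j => if j = 1 then (n : ℤ) else tauF n g k (2 * j - 2) + tauF n g k (2 * j - 1)

/-- The partition of `M'_even`:
`(P_1, P_2 ∪ P_3, …, P_{r−3} ∪ P_{r−2}, P_{r−1}, P_r)`, indexed `1, …, k+2`. -/
def QevenF' {α : Type*} [DecidableEq α] (P : ℕ → Finset α) (k : ℕ) : ℕ → Finset α :=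
  fun j => if j = 1 then P 1
    else if j ≤ k then P (2 * j - 2) ∪ P (2 * j - 1)
    else if j = k + 1 then P (2 * k)
    else P (2 * k + 1)

/-- The thresholds of `M'_even`:
`(n, τ_2 + τ_3, …, τ_{r−3} + τ_{r−2}, τ_{r−1} + τ_r − θ, θ)`. -/
def sevenF' (n g k : ℕ) : ℕ → ℤ :=
  fun j => if j = 1 then (n : ℤ)
    else if j ≤ k then tauF n g k (2 * j - 2) + tauF n g k (2 * j - 1)
    else if j = k + 1 then tauF n g k (2 * k) + tauF n g k (2 * k + 1) - thetaF n g
    else thetaF n g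

/-!
In a nested matroid with nonnegative thresholds, `rk(S) = |S| - max(0, max_t e_t(S))`, where
`e_t(S) = Σ_{s ≥ t} (|S ∩ Q_s| - σ_s)` is the excess of `S` over the thresholds of the tail of
blocks starting at `t`. An independent `I ⊆ S` has `e_t(I) ≤ 0` and
`e_t(S) - e_t(I) ≤ |S \ I|`, which gives `≤`. Conversely, while the maximal excess is positive,
deleting from `S` an element of the last block that meets `S` lowers every positive excess by one,
which gives `≥`.

For `M_even`, the tail starting at `Q_t = P_{2t-2} ∪ P_{2t-1}` has excess `ℓ_{2t-2}`, and the
excess of the whole ground set never beats the one starting at `Q_2`, because `|S ∩ P_1| ≤ n`.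
-/

open Finset

section NestedMatroid

variable {α : Type*} [DecidableEq α] {m : ℕ} {Q : ℕ → Finset α} {σ : ℕ → ℤ}

def nestedExcess (m : ℕ) (Q : ℕ → Finset α) (σ : ℕ → ℤ) (S : Finset α)
    (t : ℕ) : ℤ :=
  ∑ s ∈ Icc t m, (((S ∩ Q s).card : ℤ) - σ s)

def maxNestedExcess (m : ℕ) (Q : ℕ → Finset α) (σ : ℕ → ℤ) (S : Finset α) : ℤ :=
  (Icc 1 m).fold max 0 (nestedExcess m Q σ S)

lemma nestedExcess_eq_add {S : Finset α} {t : ℕ} (ht : t ≤ m) :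
    nestedExcess m Q σ S t = ((S ∩ Q t).card - σ t) + nestedExcess m Q σ S (t + 1) := by
  rw [nestedExcess, ← insert_Icc_add_one_left_eq_Icc ht, sum_insert (by simp)]
  rfl

lemma nestedExcess_le_fold_max (S : Finset α) (t : ℕ) :
    nestedExcess m Q σ S t ≤ (Icc t m).fold max 0 (nestedExcess m Q σ S) := by
  by_cases ht : t ≤ m
  · exact (le_fold_max _).2 (Or.inr ⟨t, mem_Icc.2 ⟨le_rfl, ht⟩, le_rfl⟩)
  · simp [nestedExcess, Icc_eq_empty ht]

lemma maxNestedExcess_nonneg (S : Finset α) : 0 ≤ maxNestedExcess m Q σ S :=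
  (le_fold_max _).2 (Or.inl le_rfl)

lemma nIndep_iff_forall_nestedExcess_nonpos {I : Finset α} :
    NIndep m Q σ I ↔ ∀ t ∈ Icc 1 m, nestedExcess m Q σ I t ≤ 0 := by
  simp only [NIndep, nestedExcess, sum_sub_distrib, sub_nonpos]

lemma nIndep_iff_maxNestedExcess_eq_zero {I : Finset α} :
    NIndep m Q σ I ↔ maxNestedExcess m Q σ I = 0 := by
  rw [← (maxNestedExcess_nonneg I).ge_iff_eq', maxNestedExcess, fold_max_le,
    nIndep_iff_forall_nestedExcess_nonpos]
  simp only [le_refl, true_and]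

lemma nestedExcess_sub_le_card_sub (hQ : (Icc 1 m : Set ℕ).PairwiseDisjoint Q)
    {I S : Finset α} (hIS : I ⊆ S) {t : ℕ} (ht : 1 ≤ t) :
    nestedExcess m Q σ S t - nestedExcess m Q σ I t ≤ S.card - I.card := by
  have hQt : (Icc t m : Set ℕ).PairwiseDisjoint Q :=
    hQ.subset (coe_subset.2 (Icc_subset_Icc_left ht))
  have hblock : ∀ s, ((S ∩ Q s).card : ℤ) = ((S \ I) ∩ Q s).card + (I ∩ Q s).card := by
    intro s
    rw [← card_sdiff_add_card_eq_card (inter_subset_inter_right hIS),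
      show (S ∩ Q s) \ (I ∩ Q s) = (S \ I) ∩ Q s by ext; simp; tauto]
    push_cast
    rfl
  calc nestedExcess m Q σ S t - nestedExcess m Q σ I t
      = ∑ s ∈ Icc t m, (((S \ I) ∩ Q s).card : ℤ) := by
        rw [nestedExcess, nestedExcess, ← sum_sub_distrib]
        exact sum_congr rfl fun s _ => by rw [hblock]; ring
    _ = ((Icc t m).biUnion fun s => (S \ I) ∩ Q s).card := by
        rw [card_biUnion (hQt.mono fun _ => inter_subset_right)]
        push_cast
        rfl
    _ ≤ (S \ I).card := by
        exact_mod_cast card_le_card (biUnion_subset.2 fun _ _ => inter_subset_left)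
    _ = S.card - I.card := by
        rw [← card_sdiff_add_card_eq_card hIS]
        push_cast
        ring

lemma card_add_maxNestedExcess_le (hQ : (Icc 1 m : Set ℕ).PairwiseDisjoint Q)
    {I S : Finset α} (hIS : I ⊆ S) (hI : NIndep m Q σ I) :
    (I.card : ℤ) + maxNestedExcess m Q σ S ≤ S.card := by
  have hIS' : (I.card : ℤ) ≤ S.card := by exact_mod_cast card_le_card hIS
  suffices maxNestedExcess m Q σ S ≤ S.card - I.card by linarith
  refine (fold_max_le _).2 ⟨by linarith, fun t ht => ?_⟩
  have h := nestedExcess_sub_le_card_sub (σ := σ) hQ hIS (mem_Icc.1 ht).1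
  linarith [nIndep_iff_forall_nestedExcess_nonpos.1 hI t ht]

lemma nestedExcess_nonpos_of_forall_inter_eq_empty (hσ : ∀ s ∈ Icc 1 m, 0 ≤ σ s)
    {S : Finset α} {t : ℕ} (ht : 1 ≤ t) (hS : ∀ s ∈ Icc t m, S ∩ Q s = ∅) :
    nestedExcess m Q σ S t ≤ 0 :=
  sum_nonpos fun s hs => by
    rw [hS s hs, card_empty, Nat.cast_zero, zero_sub, neg_nonpos]
    exact hσ s (Icc_subset_Icc_left ht hs)

lemma nestedExcess_erase (hQ : (Icc 1 m : Set ℕ).PairwiseDisjoint Q) {S : Finset α} {e : α}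
    {j : ℕ} (hj : j ∈ Icc 1 m) (he : e ∈ S ∩ Q j) {t : ℕ} (ht : 1 ≤ t) :
    nestedExcess m Q σ (S.erase e) t = nestedExcess m Q σ S t - if t ≤ j then 1 else 0 := by
  have hblock : ∀ s ∈ Icc t m,
      ((S.erase e ∩ Q s).card : ℤ) = (S ∩ Q s).card - if j = s then 1 else 0 := by
    intro s hs
    rw [erase_inter]
    by_cases hjs : j = s
    · subst hjs
      rw [if_pos rfl, ← card_erase_add_one he]
      push_cast
      ring
    · have : e ∉ S ∩ Q s := fun h =>
        hjs (hQ.elim_finset hj (Icc_subset_Icc_left ht hs) e (mem_inter.1 he).2 (mem_inter.1 h).2)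
      rw [erase_eq_of_notMem this, if_neg hjs, sub_zero]
  have hj' : j ∈ Icc t m ↔ t ≤ j := by simp only [mem_Icc, (mem_Icc.1 hj).2, and_true]
  rw [nestedExcess, nestedExcess, sum_congr rfl fun s hs => by rw [hblock s hs]]
  simp only [sub_right_comm _ _ (σ _), sum_sub_distrib, sum_ite_eq, hj']

lemma exists_mem_maxNestedExcess_erase (hQ : (Icc 1 m : Set ℕ).PairwiseDisjoint Q)
    (hσ : ∀ s ∈ Icc 1 m, 0 ≤ σ s) {S : Finset α} (hS : maxNestedExcess m Q σ S ≠ 0) :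
    ∃ e ∈ S, maxNestedExcess m Q σ (S.erase e) = maxNestedExcess m Q σ S - 1 := by
  set M := maxNestedExcess m Q σ S
  have hMpos : 0 < M := (maxNestedExcess_nonneg S).lt_of_ne' hS
  obtain ⟨t, ht, hMt⟩ : ∃ t ∈ Icc 1 m, M ≤ nestedExcess m Q σ S t :=
    ((le_fold_max _).1 le_rfl).resolve_left hMpos.not_ge
  have ht1 := (mem_Icc.1 ht).1
  obtain ⟨s, hs, hsS⟩ : ∃ s ∈ Icc t m, (S ∩ Q s).Nonempty := by
    by_contra! h
    linarith [nestedExcess_nonpos_of_forall_inter_eq_empty hσ ht1 h]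
  set B := (Icc 1 m).filter fun s => (S ∩ Q s).Nonempty
  obtain ⟨j, hjB, hjmax⟩ :=
    B.exists_max_image id ⟨s, mem_filter.2 ⟨Icc_subset_Icc_left ht1 hs, hsS⟩⟩
  obtain ⟨hj, e, he⟩ := mem_filter.1 hjB
  have htj : t ≤ j :=
    (mem_Icc.1 hs).1.trans (hjmax s (mem_filter.2 ⟨Icc_subset_Icc_left ht1 hs, hsS⟩))
  have hafter : ∀ u ∈ Icc 1 m, j < u → nestedExcess m Q σ S u ≤ 0 := fun u hu hju =>
    nestedExcess_nonpos_of_forall_inter_eq_empty hσ (mem_Icc.1 hu).1 fun s hs =>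
      not_nonempty_iff_eq_empty.1 fun hne => by
        have := hjmax s (mem_filter.2 ⟨Icc_subset_Icc_left (mem_Icc.1 hu).1 hs, hne⟩)
        simp only [id, mem_Icc] at this hs
        omega
  refine ⟨e, (mem_inter.1 he).1,
    le_antisymm ((fold_max_le _).2 ⟨by linarith, fun u hu => ?_⟩) ?_⟩
  · rw [nestedExcess_erase hQ hj he (mem_Icc.1 hu).1]
    split_ifs with huj
    · have hu' : nestedExcess m Q σ S u ≤ M := (le_fold_max _).2 (Or.inr ⟨u, hu, le_rfl⟩)
      linarith
    · linarith [hafter u hu (not_le.1 huj)]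
  · refine (le_fold_max _).2 (Or.inr ⟨t, ht, ?_⟩)
    rw [nestedExcess_erase hQ hj he ht1, if_pos htj]
    linarith

lemma exists_nIndep_subset_card_add_maxNestedExcess (hQ : (Icc 1 m : Set ℕ).PairwiseDisjoint Q)
    (hσ : ∀ s ∈ Icc 1 m, 0 ≤ σ s) (S : Finset α) :
    ∃ I ⊆ S, NIndep m Q σ I ∧ (I.card : ℤ) + maxNestedExcess m Q σ S = S.card := by
  induction S using Finset.strongInduction with
  | H S ih =>
    by_cases h0 : maxNestedExcess m Q σ S = 0
    · exact ⟨S, subset_rfl, nIndep_iff_maxNestedExcess_eq_zero.2 h0, by rw [h0, add_zero]⟩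
    obtain ⟨e, heS, he⟩ := exists_mem_maxNestedExcess_erase hQ hσ h0
    obtain ⟨I, hIS, hI, hcard⟩ := ih _ (erase_ssubset heS)
    refine ⟨I, hIS.trans (erase_subset e S), hI, ?_⟩
    rw [← card_erase_add_one heS]
    push_cast
    linarith

theorem nrank_nIndep (hQ : (Icc 1 m : Set ℕ).PairwiseDisjoint Q)
    (hσ : ∀ s ∈ Icc 1 m, 0 ≤ σ s) (S : Finset α) :
    (nrank (NIndep m Q σ) S : ℤ) = S.card - maxNestedExcess m Q σ S := by
  obtain ⟨I₀, hI₀S, hI₀, hcard⟩ := exists_nIndep_subset_card_add_maxNestedExcess hQ hσ S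
  have hrank : nrank (NIndep m Q σ) S = I₀.card := by
    refine IsGreatest.csSup_eq ⟨⟨I₀, hI₀S, hI₀, rfl⟩, ?_⟩
    rintro _ ⟨I, hIS, hI, rfl⟩
    have := card_add_maxNestedExcess_le hQ hIS hI
    exact_mod_cast (by linarith : (I.card : ℤ) ≤ I₀.card)
  rw [hrank]
  linarith

end NestedMatroid

lemma card_eq_sum_card_inter {α ι : Type*} [DecidableEq α] {A : Finset ι} {P : ι → Finset α}
    (hP : (A : Set ι).PairwiseDisjoint P) (hcover : ∀ a, ∃ i ∈ A, a ∈ P i)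
    (S : Finset α) :
    S.card = ∑ i ∈ A, (S ∩ P i).card := by
  rw [← card_biUnion (hP.mono fun _ => inter_subset_right)]
  congr 1
  ext a
  simp only [mem_biUnion, mem_inter]
  exact ⟨fun ha => (hcover a).imp fun i ⟨hi, hai⟩ => ⟨hi, ha, hai⟩,
    fun ⟨_, _, ha, _⟩ => ha⟩

lemma sum_Icc_pairs (f : ℕ → ℤ) {t : ℕ} (ht : 1 ≤ t) (m : ℕ) :
    ∑ s ∈ Icc t (m + 1), (f (2 * s - 2) + f (2 * s - 1))
      = ∑ i ∈ Icc (2 * t - 2) (2 * m + 1), f i := by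
  have hmaps : ∀ i ∈ Icc (2 * t - 2) (2 * m + 1), i / 2 + 1 ∈ Icc t (m + 1) := by
    simp only [mem_Icc]
    omega
  rw [← sum_fiberwise_of_maps_to hmaps]
  refine sum_congr rfl fun s hs => ?_
  rw [mem_Icc] at hs
  have hfiber : (Icc (2 * t - 2) (2 * m + 1)).filter (fun i => i / 2 + 1 = s)
      = {2 * s - 2, 2 * s - 1} := by
    ext i
    simp only [mem_filter, mem_Icc, mem_insert, mem_singleton]
    omega
  rw [hfiber, sum_pair (by omega)]

lemma fold_max_Icc_one_eq {f : ℕ → ℤ} {m : ℕ} (h : f 1 ≤ (Icc 2 m).fold max 0 f) :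
    (Icc 1 m).fold max 0 f = (Icc 2 m).fold max 0 f := by
  rcases Nat.eq_zero_or_pos m with rfl | hm
  · rfl
  · rw [← insert_Icc_add_one_left_eq_Icc hm, fold_insert (by simp)]
    exact max_eq_right h

lemma fold_max_filter_even (f : ℕ → ℤ) (k : ℕ) :
    ((Icc 1 (2 * k + 1)).filter (fun t => Even t)).fold max 0 f
      = (Icc 2 (k + 1)).fold max 0 (fun t => f (2 * t - 2)) := by
  have himage : (Icc 1 (2 * k + 1)).filter (fun t => Even t)
      = (Icc 2 (k + 1)).image (fun t => 2 * t - 2) := by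
    ext i
    simp only [mem_filter, mem_image, mem_Icc, Nat.even_iff]
    exact ⟨fun h => ⟨i / 2 + 1, by omega, by omega⟩, fun ⟨t, ht, hti⟩ => by omega⟩
  rw [himage, fold_image fun a ha b hb hab => by simp only [coe_Icc, Set.mem_Icc] at ha hb; omega]
  rfl

lemma tauF_nonneg {n g k : ℕ} (h : 2 * g ≤ n) (i : ℕ) : 0 ≤ tauF n g k i := by
  have hg : (g : ℤ) ≤ n / 2 := by omega
  have hr : 0 ≤ (g : ℤ) * (2 * k + 1) / 4 := Int.ediv_nonneg (by positivity) (by norm_num)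
  unfold tauF
  split_ifs <;> linarith

lemma sevenF_nonneg {n g k : ℕ} (h : 2 * g ≤ n) (j : ℕ) : 0 ≤ sevenF n g k j := by
  unfold sevenF
  split_ifs
  · positivity
  · linarith [tauF_nonneg (k := k) h (2 * j - 2), tauF_nonneg (k := k) h (2 * j - 1)]

section Meven

variable {α : Type*} [DecidableEq α] {P : ℕ → Finset α} {k : ℕ}

lemma exists_mem_of_mem_QevenF {j : ℕ} {a : α} (hj : j ∈ Icc 1 (k + 1))
    (ha : a ∈ QevenF P k j) :
    ∃ i ∈ Icc 1 (2 * k + 1), i / 2 + 1 = j ∧ a ∈ P i := by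
  rw [mem_Icc] at hj
  unfold QevenF at ha
  split_ifs at ha with hj1
  · exact ⟨1, by simp, by omega, ha⟩
  · rcases mem_union.1 ha with ha | ha
    · exact ⟨2 * j - 2, mem_Icc.2 ⟨by omega, by omega⟩, by omega, ha⟩
    · exact ⟨2 * j - 1, mem_Icc.2 ⟨by omega, by omega⟩, by omega, ha⟩

lemma pairwiseDisjoint_QevenF (hP : (Icc 1 (2 * k + 1) : Set ℕ).PairwiseDisjoint P) :
    (Icc 1 (k + 1) : Set ℕ).PairwiseDisjoint (QevenF P k) := by
  intro i hi j hj hij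
  refine disjoint_left.2 fun a hai haj => ?_
  obtain ⟨c, hc, rfl, hac⟩ := exists_mem_of_mem_QevenF hi hai
  obtain ⟨c', hc', rfl, hac'⟩ := exists_mem_of_mem_QevenF hj haj
  exact disjoint_left.1 (hP hc hc' fun h => hij (h ▸ rfl)) hac hac'

lemma nestedExcess_QevenF {n g : ℕ} (hP : (Icc 1 (2 * k + 1) : Set ℕ).PairwiseDisjoint P)
    (S : Finset α) {t : ℕ} (ht : 2 ≤ t) :
    nestedExcess (k + 1) (QevenF P k) (sevenF n g k) S t = ellT n g k (sigF P S) (2 * t - 2) := by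
  rw [ellT, ← sum_Icc_pairs _ (by omega : 1 ≤ t)]
  refine sum_congr rfl fun s hs => ?_
  rw [mem_Icc] at hs
  have hd : Disjoint (P (2 * s - 2)) (P (2 * s - 1)) :=
    hP (mem_Icc.2 ⟨by omega, by omega⟩) (mem_Icc.2 ⟨by omega, by omega⟩) (by omega)
  rw [QevenF, sevenF, if_neg (by omega), if_neg (by omega), inter_union_distrib_left,
    card_union_of_disjoint (hd.mono inter_subset_right inter_subset_right), sigF, sigF]
  push_cast
  ring

end Meven

theorem rank_Meven_general
    {α : Type*} [DecidableEq α]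
    (n g k : ℕ)
    (hgrn : 5 * g * (2 * k + 1) ≤ n)
    (P : ℕ → Finset α)
    (hdisj : ∀ i ∈ Finset.Icc 1 (2 * k + 1), ∀ j ∈ Finset.Icc 1 (2 * k + 1),
        i ≠ j → Disjoint (P i) (P j))
    (hcover : ∀ a : α, ∃ i ∈ Finset.Icc 1 (2 * k + 1), a ∈ P i)
    (hcard : ∀ i ∈ Finset.Icc 1 (2 * k + 1), (P i).card = n)
    (S : Finset α) :
    (nrank (NIndep (k + 1) (QevenF P k) (sevenF n g k)) S : ℤ)
      = (∑ i ∈ Finset.Icc 1 (2 * k + 1), sigF P S i)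
        - ((Finset.Icc 1 (2 * k + 1)).filter (fun t => Even t)).fold max 0
            (ellT n g k (sigF P S)) := by
  have hP : (Icc 1 (2 * k + 1) : Set ℕ).PairwiseDisjoint P := fun i hi j hj => hdisj i hi j hj
  have hσ : ∀ j ∈ Icc 1 (k + 1), 0 ≤ sevenF n g k j :=
    fun j _ => sevenF_nonneg (by nlinarith) j
  have hP1 : ((S ∩ QevenF P k 1).card : ℤ) ≤ sevenF n g k 1 := by
    simp only [QevenF, sevenF, if_pos]
    exact_mod_cast (card_le_card inter_subset_right).trans (hcard 1 (by simp)).le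
  have hfirst : nestedExcess (k + 1) (QevenF P k) (sevenF n g k) S 1
      ≤ (Icc 2 (k + 1)).fold max 0 (nestedExcess (k + 1) (QevenF P k) (sevenF n g k) S) := by
    rw [nestedExcess_eq_add (by omega)]
    linarith [nestedExcess_le_fold_max (m := k + 1) (Q := QevenF P k) (σ := sevenF n g k) S 2]
  rw [nrank_nIndep (pairwiseDisjoint_QevenF hP) hσ, maxNestedExcess, fold_max_Icc_one_eq hfirst,
    fold_max_filter_even, card_eq_sum_card_inter hP hcover S,
    fold_congr fun t ht => nestedExcess_QevenF hP S (mem_Icc.1 ht).1]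
  push_cast
  rfl

/-- For every `S ⊆ U` with signature `x`,
`rk_{M_even}(S) = Σ_i x_i − max(0, max_{even a} ℓ_a(x))`. -/
theorem rank_Meven
    {α : Type*} [Fintype α] [DecidableEq α]
    (n g k : ℕ) (hk : 1 ≤ k) (hn : 0 < n) (hn2 : 2 ∣ n) (hg : 0 < g) (hg4 : 4 ∣ g)
    (hgrn : 5 * g * (2 * k + 1) ≤ n)
    (P : ℕ → Finset α)
    (hdisj : ∀ i ∈ Finset.Icc 1 (2 * k + 1), ∀ j ∈ Finset.Icc 1 (2 * k + 1),
        i ≠ j → Disjoint (P i) (P j))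
    (hcover : ∀ a : α, ∃ i ∈ Finset.Icc 1 (2 * k + 1), a ∈ P i)
    (hcard : ∀ i ∈ Finset.Icc 1 (2 * k + 1), (P i).card = n)
    (S : Finset α) :
    (nrank (NIndep (k + 1) (QevenF P k) (sevenF n g k)) S : ℤ)
      = (∑ i ∈ Finset.Icc 1 (2 * k + 1), sigF P S i)
        - ((Finset.Icc 1 (2 * k + 1)).filter (fun t => Even t)).fold max 0
            (ellT n g k (sigF P S)) :=
  rank_Meven_general n g k hgrn P hdisj hcover hcard S
end

section
/- For every subset S ⊆ U with signature x with respect to the partition P = (P_1,…,P_r), the rank of S in M'_even satisfies rk_{M'_even}(S) = Σ_{i=1}^{r} x̄_i − max(0, max_{even a, 1 ≤ a ≤ r} ℓ_a(x̄)), where x̄ = (x_1, …, x_{r−1}, min(x_r, θ)); that is, rk_{M'_even}(S) equals the value of the rank formula of M_even evaluated at the truncated signature x̄. -/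
/-- The truncated signature `x̄ = (x_1, …, x_{r−1}, min(x_r, θ))`, for `r = 2k+1`. -/
def truncT (n g k : ℕ) (x : ℕ → ℤ) : ℕ → ℤ :=
  fun j => if j = 2 * k + 1 then min (x (2 * k + 1)) (thetaF n g) else x j


section AuxNestedRank
open Finset

lemma sum_Icc_cons (f : ℕ → ℤ) {a b : ℕ} (h : a ≤ b) :
    ∑ s ∈ Icc a b, f s = f a + ∑ s ∈ Icc (a+1) b, f s := by
  rw [Finset.Icc_add_one_left_eq_Ioc, ← Finset.sum_insert (by simp), Finset.Ioc_insert_left h]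

lemma telescope (f : ℕ → ℤ) : ∀ m t, t ≤ m + 1 →
    ∑ s ∈ Icc t m, (f s - f (s+1)) = f t - f (m+1) := by
  intro m
  induction m with
  | zero =>
    intro t ht
    rcases Nat.le_one_iff_eq_zero_or_eq_one.1 ht with rfl | rfl
    · simp
    · rw [Finset.Icc_eq_empty (by omega)]; simp
  | succ m ih =>
    intro t ht
    rcases Nat.lt_or_ge t (m+2) with h | h
    · have ht' : t ≤ m + 1 := by omega
      rw [Finset.sum_Icc_succ_top ht', ih t ht']
      ring
    · have htm : t = m + 2 := by omega
      subst htm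
      rw [Finset.Icc_eq_empty (by omega)]
      simp

lemma card_partition {α : Type*} [DecidableEq α] (s : Finset ℕ) (Q : ℕ → Finset α)
    (hd : ∀ i ∈ s, ∀ j ∈ s, i ≠ j → Disjoint (Q i) (Q j)) (S : Finset α)
    (hc : ∀ a ∈ S, ∃ j ∈ s, a ∈ Q j) :
    S.card = ∑ j ∈ s, (S ∩ Q j).card := by
  have hS : S = s.biUnion (fun j => S ∩ Q j) := by
    ext a
    simp only [Finset.mem_biUnion, Finset.mem_inter]
    constructor
    · intro ha
      obtain ⟨j, hj, hq⟩ := hc a ha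
      exact ⟨j, hj, ha, hq⟩
    · rintro ⟨j, _, ha, _⟩
      exact ha
  have hdd : ∀ i ∈ s, ∀ j ∈ s, i ≠ j → Disjoint (S ∩ Q i) (S ∩ Q j) := by
    intro i hi j hj hij
    exact Finset.disjoint_of_subset_left Finset.inter_subset_right
      (Finset.disjoint_of_subset_right Finset.inter_subset_right (hd i hi j hj hij))
  calc S.card = (s.biUnion (fun j => S ∩ Q j)).card := by rw [← hS]
    _ = ∑ j ∈ s, (S ∩ Q j).card := Finset.card_biUnion hdd

lemma nested_rank {α : Type*} [DecidableEq α] (m : ℕ) (Q : ℕ → Finset α) (σ : ℕ → ℤ)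
    (hQd : ∀ i ∈ Icc 1 m, ∀ j ∈ Icc 1 m, i ≠ j → Disjoint (Q i) (Q j))
    (hσ : ∀ j ∈ Icc 1 m, 0 ≤ σ j)
    (S : Finset α) (hSc : ∀ a ∈ S, ∃ j ∈ Icc 1 m, a ∈ Q j) :
    (nrank (NIndep m Q σ) S : ℤ) =
      (S.card : ℤ) - (Icc 1 m).fold max 0
        (fun t => ∑ s ∈ Icc t m, (((S ∩ Q s).card : ℤ) - σ s)) := by
  classical
  set y : ℕ → ℤ := fun s => ((S ∩ Q s).card : ℤ) with hy
  set exc : ℕ → ℤ := fun t => ∑ s ∈ Icc t m, (y s - σ s) with hexc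
  set D : ℕ → ℤ := fun t => (Icc t m).fold max 0 exc with hD
  have hD0 : ∀ t, 0 ≤ D t := fun t => (Finset.le_fold_max 0).2 (Or.inl le_rfl)
  have hDexc : ∀ t, ∀ t' ∈ Icc t m, exc t' ≤ D t := by
    intro t t' ht'
    exact (Finset.le_fold_max _).2 (Or.inr ⟨t', ht', le_rfl⟩)
  have hDins : ∀ t, t ≤ m → D t = max (exc t) (D (t+1)) := by
    intro t ht
    have hins : Icc t m = insert t (Icc (t+1) m) := by
      rw [Finset.Icc_add_one_left_eq_Ioc, Finset.Ioc_insert_left ht]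
    show (Icc t m).fold max 0 exc = _
    rw [hins, Finset.fold_insert (by simp)]
  have hDtop : ∀ t, m < t → D t = 0 := by
    intro t ht
    show (Icc t m).fold max 0 exc = 0
    rw [Finset.Icc_eq_empty (by omega), Finset.fold_empty]
  have hDge : ∀ t, D (t+1) ≤ D t := by
    intro t
    rcases Nat.lt_or_ge m t with h | h
    · rw [hDtop t (by omega), hDtop (t+1) (by omega)]
    · rw [hDins t h]
      exact le_max_right _ _
  have hScard : (S.card : ℤ) = ∑ s ∈ Icc 1 m, y s := by
    rw [card_partition (Icc 1 m) Q hQd S hSc]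
    push_cast
    rfl
  have hy0 : ∀ s, 0 ≤ y s := fun s => Int.natCast_nonneg _
  have hdel : ∀ s ∈ Icc 1 m, D s - D (s+1) ≤ y s := by
    intro s hs
    have hs' := Finset.mem_Icc.1 hs
    have hexcs : exc s = (y s - σ s) + ∑ s' ∈ Icc (s+1) m, (y s' - σ s') := by
      rw [hexc]
      exact sum_Icc_cons _ hs'.2
    have h2 : ∑ s' ∈ Icc (s+1) m, (y s' - σ s') ≤ D (s+1) := by
      rcases Nat.lt_or_ge m (s+1) with h | h
      · rw [Finset.Icc_eq_empty (by omega)]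
        simpa using hD0 (s+1)
      · exact hDexc (s+1) (s+1) (Finset.mem_Icc.2 ⟨le_rfl, h⟩)
    have hσs := hσ s hs
    have hys := hy0 s
    have hmax : D s ≤ y s + D (s+1) := by
      rw [hDins s hs'.2]
      exact max_le (by omega) (by omega)
    omega
  -- upper bound for independent subsets
  have hub : ∀ I : Finset α, I ⊆ S → NIndep m Q σ I →
      (I.card : ℤ) ≤ (S.card : ℤ) - D 1 := by
    intro I hIS hInd
    have hcle : (I.card : ℤ) ≤ (S.card : ℤ) := by
      exact_mod_cast Nat.cast_le.2 (Finset.card_le_card hIS)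
    have hd1 : D 1 ≤ (S.card : ℤ) - I.card := by
      show (Icc 1 m).fold max 0 exc ≤ _
      rw [Finset.fold_max_le]
      refine ⟨by omega, ?_⟩
      intro t ht
      have ht' := Finset.mem_Icc.1 ht
      have hIcard : (I.card : ℤ) = ∑ s ∈ Icc 1 m, ((I ∩ Q s).card : ℤ) := by
        rw [card_partition (Icc 1 m) Q hQd I (fun a ha => hSc a (hIS ha))]
        push_cast
        rfl
      have hsplit : Icc 1 m = Icc 1 (t-1) ∪ Icc t m := by
        ext a
        simp only [Finset.mem_Icc, Finset.mem_union]
        omega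
      have hdisj2 : Disjoint (Icc 1 (t-1)) (Icc t m) := by
        rw [Finset.disjoint_left]
        intro a ha hb
        have h1 := Finset.mem_Icc.1 ha
        have h2 := Finset.mem_Icc.1 hb
        omega
      have hI2 : (I.card : ℤ) ≤ ∑ s ∈ Icc 1 (t-1), y s + ∑ s ∈ Icc t m, σ s := by
        rw [hIcard, hsplit, Finset.sum_union hdisj2]
        have h1 : ∑ s ∈ Icc 1 (t-1), ((I ∩ Q s).card : ℤ) ≤ ∑ s ∈ Icc 1 (t-1), y s := by
          apply Finset.sum_le_sum
          intro s _
          show ((I ∩ Q s).card : ℤ) ≤ ((S ∩ Q s).card : ℤ)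
          exact Nat.cast_le.2 (Finset.card_le_card
            (Finset.inter_subset_inter hIS Finset.Subset.rfl))
        have h2 := hInd t ht
        omega
      have hysplit : (S.card : ℤ) = ∑ s ∈ Icc 1 (t-1), y s + ∑ s ∈ Icc t m, y s := by
        rw [hScard, hsplit, Finset.sum_union hdisj2]
      show (∑ s ∈ Icc t m, (y s - σ s)) ≤ _
      rw [Finset.sum_sub_distrib]
      omega
    omega
  -- construct a maximum independent subset
  set keep : ℕ → ℕ := fun s => (y s - (D s - D (s+1))).toNat with hkeep
  have hkeepz : ∀ s ∈ Icc 1 m, (keep s : ℤ) = y s - (D s - D (s+1)) := by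
    intro s hs
    have h1 := hdel s hs
    have h2 := hDge s
    show ((y s - (D s - D (s+1))).toNat : ℤ) = _
    rw [Int.toNat_of_nonneg (by omega)]
  have hkeeple : ∀ s ∈ Icc 1 m, keep s ≤ (S ∩ Q s).card := by
    intro s hs
    have h1 := hkeepz s hs
    have h2 := hDge s
    have hyv : y s = ((S ∩ Q s).card : ℤ) := rfl
    omega
  have hT : ∀ s, ∃ T ⊆ S ∩ Q s, T.card = min (keep s) ((S ∩ Q s).card) :=
    fun s => Finset.exists_subset_card_eq (min_le_right _ _)
  choose T hT1 hT2 using hT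
  have hTcard : ∀ s ∈ Icc 1 m, (T s).card = keep s := by
    intro s hs
    rw [hT2 s, min_eq_left (hkeeple s hs)]
  set I : Finset α := (Icc 1 m).biUnion T with hI
  have hTQ : ∀ s, T s ⊆ Q s := fun s => (hT1 s).trans Finset.inter_subset_right
  have hIS : I ⊆ S := by
    rw [hI]
    apply Finset.biUnion_subset.2
    intro s _
    exact (hT1 s).trans Finset.inter_subset_left
  have hTd : ∀ i ∈ Icc 1 m, ∀ j ∈ Icc 1 m, i ≠ j → Disjoint (T i) (T j) := by
    intro i hi j hj hij
    exact Finset.disjoint_of_subset_left (hTQ i)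
      (Finset.disjoint_of_subset_right (hTQ j) (hQd i hi j hj hij))
  have hIQ : ∀ s ∈ Icc 1 m, I ∩ Q s = T s := by
    intro s hs
    ext a
    simp only [hI, Finset.mem_inter, Finset.mem_biUnion]
    constructor
    · rintro ⟨⟨s', hs', ha⟩, haQ⟩
      rcases eq_or_ne s' s with rfl | hne
      · exact ha
      · exact absurd haQ (Finset.disjoint_left.1 (hQd s' hs' s hs hne) (hTQ s' ha))
    · intro ha
      exact ⟨⟨s, hs, ha⟩, hTQ s ha⟩
  have hsuffix : ∀ t ∈ Icc 1 m, ∑ s ∈ Icc t m, ((I ∩ Q s).card : ℤ)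
      = (∑ s ∈ Icc t m, y s) - D t := by
    intro t ht
    have ht' := Finset.mem_Icc.1 ht
    have h1 : ∀ s ∈ Icc t m, ((I ∩ Q s).card : ℤ) = y s - (D s - D (s+1)) := by
      intro s hs
      have hs1 := Finset.mem_Icc.1 hs
      have hsm : s ∈ Icc 1 m := Finset.mem_Icc.2 ⟨by omega, hs1.2⟩
      rw [hIQ s hsm, hTcard s hsm]
      exact hkeepz s hsm
    rw [Finset.sum_congr rfl h1, Finset.sum_sub_distrib, telescope D m t (by omega),
      hDtop (m+1) (by omega)]
    ring
  have hInd : NIndep m Q σ I := by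
    intro t ht
    rw [hsuffix t ht]
    have h2 : exc t ≤ D t := hDexc t t (Finset.mem_Icc.2 ⟨le_rfl, (Finset.mem_Icc.1 ht).2⟩)
    rw [hexc] at h2
    simp only [Finset.sum_sub_distrib] at h2
    omega
  have hIcard : (I.card : ℤ) = (S.card : ℤ) - D 1 := by
    rcases Nat.lt_or_ge m 1 with h | h
    · interval_cases m
      have he : Icc 1 0 = (∅ : Finset ℕ) := Finset.Icc_eq_empty (by omega)
      rw [hDtop 1 (by omega)]
      rw [hScard, he]
      simp [hI, he]
    · have hc1 : (I.card : ℤ) = ∑ s ∈ Icc 1 m, ((T s).card : ℤ) := by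
        rw [hI, Finset.card_biUnion hTd]
        push_cast
        rfl
      have hkeq : ∀ s ∈ Icc 1 m, ((T s).card : ℤ) = y s - (D s - D (s+1)) := by
        intro s hs
        rw [hTcard s hs]
        exact hkeepz s hs
      rw [hc1, Finset.sum_congr rfl hkeq,
        Finset.sum_sub_distrib, telescope D m 1 (by omega), hDtop (m+1) (by omega), hScard]
      ring
  have hrank : nrank (NIndep m Q σ) S = I.card := by
    unfold nrank
    apply le_antisymm
    · apply csSup_le
      · exact ⟨I.card, I, hIS, hInd, rfl⟩
      · rintro c ⟨J, hJS, hJind, rfl⟩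
        have h := hub J hJS hJind
        rw [← hIcard] at h
        exact_mod_cast h
    · apply le_csSup
      · refine ⟨S.card, ?_⟩
        rintro c ⟨J, hJS, _, rfl⟩
        exact Finset.card_le_card hJS
      · exact ⟨I, hIS, hInd, rfl⟩
  rw [hrank, hIcard]

def indF (k : ℕ) : ℕ → Finset ℕ := fun j =>
  if j = 1 then {1} else if j ≤ k then {2*j-2, 2*j-1}
  else if j = k+1 then {2*k} else {2*k+1}

def lobF (k : ℕ) : ℕ → ℕ := fun t =>
  if t = 1 then 1 else if t ≤ k+1 then 2*t-2 else 2*k+1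

def hibF (k : ℕ) : ℕ → ℕ := fun j =>
  if j = 1 then 1 else if j ≤ k then 2*j-1 else if j = k+1 then 2*k else 2*k+1

def jOfF (k : ℕ) : ℕ → ℕ := fun i =>
  if i = 1 then 1 else if i = 2*k then k+1 else if i = 2*k+1 then k+2 else i/2+1

lemma ind_bounds (k : ℕ) (hk : 1 ≤ k) {j i : ℕ} (hj2 : j ≤ k+2) (hi : i ∈ indF k j) :
    lobF k j ≤ i ∧ i ≤ hibF k j := by
  unfold indF lobF hibF at *
  split_ifs at hi ⊢ <;>
    simp only [Finset.mem_insert, Finset.mem_singleton] at hi <;> omega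

lemma hib_le (k : ℕ) (hk : 1 ≤ k) {j : ℕ} (hj2 : j ≤ k+2) : hibF k j ≤ 2*k+1 := by
  unfold hibF; split_ifs <;> omega

lemma lob_ge (k : ℕ) {j : ℕ} (hj : 1 ≤ j) : 1 ≤ lobF k j := by
  unfold lobF; split_ifs <;> omega

lemma lob_le_hib (k : ℕ) (hk : 1 ≤ k) {j : ℕ} (hj2 : j ≤ k+2) : lobF k j ≤ hibF k j := by
  unfold lobF hibF; split_ifs <;> omega

lemma hib_lt_lob (k : ℕ) (hk : 1 ≤ k) {j1 j2 : ℕ} (h2 : j1 < j2) (h3 : j2 ≤ k+2) :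
    hibF k j1 < lobF k j2 := by
  unfold hibF lobF; split_ifs <;> omega

lemma ind_mem_range (k : ℕ) (hk : 1 ≤ k) {j i : ℕ} (hj1 : 1 ≤ j) (hj2 : j ≤ k+2)
    (hi : i ∈ indF k j) : 1 ≤ i ∧ i ≤ 2*k+1 := by
  have h := ind_bounds k hk hj2 hi
  have h2 := hib_le k hk hj2
  have h3 := lob_ge k hj1
  omega

lemma jOf_spec (k : ℕ) (hk : 1 ≤ k) {i : ℕ} (h1 : 1 ≤ i) (h2 : i ≤ 2*k+1) :
    1 ≤ jOfF k i ∧ jOfF k i ≤ k+2 ∧ i ∈ indF k (jOfF k i) := by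
  unfold jOfF indF
  split_ifs <;> simp only [Finset.mem_insert, Finset.mem_singleton] <;> omega

lemma ind_elem_ne (k : ℕ) (hk : 1 ≤ k) {j1 j2 a b : ℕ} (hj1 : j1 ≤ k+2) (hj2 : j2 ≤ k+2)
    (hne : j1 ≠ j2) (ha : a ∈ indF k j1) (hb : b ∈ indF k j2) : a ≠ b := by
  have h1 := ind_bounds k hk hj1 ha
  have h2 := ind_bounds k hk hj2 hb
  rcases Nat.lt_or_ge j1 j2 with h | h
  · have := hib_lt_lob k hk h hj2
    omega
  · have := hib_lt_lob k hk (by omega : j2 < j1) hj1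
    omega

lemma ind_disj (k : ℕ) (hk : 1 ≤ k) {j1 j2 : ℕ} (hj1 : j1 ≤ k+2) (hj2 : j2 ≤ k+2)
    (hne : j1 ≠ j2) : Disjoint (indF k j1) (indF k j2) := by
  rw [Finset.disjoint_left]
  intro a ha hb
  exact ind_elem_ne k hk hj1 hj2 hne ha hb rfl

lemma biUnion_ind (k : ℕ) (hk : 1 ≤ k) {t : ℕ} (h1 : 1 ≤ t) (h2 : t ≤ k+2) :
    (Icc t (k+2)).biUnion (indF k) = Icc (lobF k t) (2*k+1) := by
  ext i
  simp only [Finset.mem_biUnion, Finset.mem_Icc]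
  constructor
  · rintro ⟨s, hs, hi⟩
    have hb := ind_bounds k hk hs.2 hi
    have hub := hib_le k hk hs.2
    have hlob : lobF k t ≤ lobF k s := by
      rcases eq_or_lt_of_le hs.1 with rfl | hlt
      · exact le_rfl
      · have hx := hib_lt_lob k hk hlt hs.2
        have hy := lob_le_hib k hk (show t ≤ k+2 by omega)
        omega
    exact ⟨by omega, by omega⟩
  · intro hi
    have h1i : 1 ≤ i := le_trans (lob_ge k h1) hi.1
    obtain ⟨hj1, hj2, hji⟩ := jOf_spec k hk h1i hi.2
    refine ⟨jOfF k i, ⟨?_, hj2⟩, hji⟩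
    by_contra hlt
    push_neg at hlt
    have hx := hib_lt_lob k hk hlt h2
    have hb := ind_bounds k hk hj2 hji
    omega

lemma Q_eq {α : Type*} [DecidableEq α] (P : ℕ → Finset α) (k : ℕ) (hk : 1 ≤ k) {j : ℕ}
    (h1 : 1 ≤ j) (h2 : j ≤ k+2) : QevenF' P k j = (indF k j).biUnion P := by
  unfold QevenF' indF
  split_ifs <;> simp

end AuxNestedRank

/-- For every `S ⊆ U` with signature `x`,
`rk_{M'_even}(S) = Σ_i x̄_i − max(0, max_{even a} ℓ_a(x̄))`, i.e. the rank formula of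
`M_even` evaluated at the truncated signature `x̄`. -/
theorem rank_Meven'
    {α : Type*} [Fintype α] [DecidableEq α]
    (n g k : ℕ) (hk : 1 ≤ k) (hn : 0 < n) (hn2 : 2 ∣ n) (hg : 0 < g) (hg4 : 4 ∣ g)
    (hgrn : 5 * g * (2 * k + 1) ≤ n)
    (P : ℕ → Finset α)
    (hdisj : ∀ i ∈ Finset.Icc 1 (2 * k + 1), ∀ j ∈ Finset.Icc 1 (2 * k + 1),
        i ≠ j → Disjoint (P i) (P j))
    (hcover : ∀ a : α, ∃ i ∈ Finset.Icc 1 (2 * k + 1), a ∈ P i)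
    (hcard : ∀ i ∈ Finset.Icc 1 (2 * k + 1), (P i).card = n)
    (S : Finset α) :
    (nrank (NIndep (k + 2) (QevenF' P k) (sevenF' n g k)) S : ℤ)
      = (∑ i ∈ Finset.Icc 1 (2 * k + 1), truncT n g k (sigF P S) i)
        - ((Finset.Icc 1 (2 * k + 1)).filter (fun t => Even t)).fold max 0
            (ellT n g k (truncT n g k (sigF P S))) := by
  classical
  have hr3 : 3 ≤ 2*k+1 := by omega
  obtain ⟨c0, hc0⟩ := hn2
  obtain ⟨d0, hd0⟩ := hg4
  have hnc : (n:ℤ) = 2*(c0:ℤ) := by rw [hc0]; push_cast; ring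
  have hgd : (g:ℤ) = 4*(d0:ℤ) := by rw [hd0]; push_cast; ring
  set c : ℤ := (c0:ℤ) with hcdef
  set d : ℤ := (d0:ℤ) with hddef
  have hdn : 0 ≤ d := Int.natCast_nonneg _
  have h15 : 15*g ≤ n := by
    refine le_trans ?_ hgrn
    nlinarith [hg, hk]
  have hc30 : 30*d ≤ c := by
    have h1 : (15*(g:ℤ)) ≤ (n:ℤ) := by exact_mod_cast h15
    rw [hgd, hnc] at h1
    linarith
  have hkZ : (1:ℤ) ≤ (k:ℤ) := by exact_mod_cast hk
  have hdk : 0 ≤ d*(k:ℤ) := mul_nonneg hdn (by positivity)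
  have htau1 : ∀ t, t ≠ 2*k+1 → tauF n g k t = c - 4*d := by
    intro t ht
    unfold tauF
    rw [if_neg ht, hnc, hgd]
    omega
  have htaur : tauF n g k (2*k+1) = c - 4*d + d*(2*(k:ℤ)+1) := by
    unfold tauF
    rw [if_pos rfl, hnc, hgd]
    have h4 : (4:ℤ)*d*(2*(k:ℤ)+1) = (d*(2*(k:ℤ)+1))*4 := by ring
    rw [h4, Int.mul_ediv_cancel _ (by norm_num)]
    omega
  have hθ : thetaF n g = c - d := by unfold thetaF; rw [hnc, hgd]; omega
  have hσ1 : sevenF' n g k 1 = (n:ℤ) := by unfold sevenF'; simp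
  have hσmid : ∀ j, 2 ≤ j → j ≤ k → sevenF' n g k j
      = tauF n g k (2*j-2) + tauF n g k (2*j-1) := by
    intro j h1 h2
    unfold sevenF'
    rw [if_neg (by omega), if_pos h2]
  have hσk1 : sevenF' n g k (k+1) = tauF n g k (2*k) + tauF n g k (2*k+1) - thetaF n g := by
    unfold sevenF'
    rw [if_neg (by omega), if_neg (by omega), if_pos rfl]
  have hσk2 : sevenF' n g k (k+2) = thetaF n g := by
    unfold sevenF'
    rw [if_neg (by omega), if_neg (by omega), if_neg (by omega)]
  have hσnn : ∀ j ∈ Finset.Icc 1 (k+2), 0 ≤ sevenF' n g k j := by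
    intro j hj
    rw [Finset.mem_Icc] at hj
    by_cases hj1 : j = 1
    · rw [hj1, hσ1]
      positivity
    · by_cases hjk : j ≤ k
      · rw [hσmid j (by omega) hjk, htau1 _ (by omega), htau1 _ (by omega)]
        linarith
      · by_cases hjk1 : j = k+1
        · rw [hjk1, hσk1, htau1 _ (by omega), htaur, hθ]
          linarith [hdk]
        · have hj2 : j = k+2 := by omega
          rw [hj2, hσk2, hθ]
          linarith
  have hQd : ∀ i ∈ Finset.Icc 1 (k+2), ∀ j ∈ Finset.Icc 1 (k+2), i ≠ j →
      Disjoint (QevenF' P k i) (QevenF' P k j) := by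
    intro i hi j hj hij
    rw [Finset.mem_Icc] at hi hj
    rw [Q_eq P k hk hi.1 hi.2, Q_eq P k hk hj.1 hj.2]
    rw [Finset.disjoint_biUnion_left]
    intro a ha
    rw [Finset.disjoint_biUnion_right]
    intro b hb
    have hra := ind_mem_range k hk hi.1 hi.2 ha
    have hrb := ind_mem_range k hk hj.1 hj.2 hb
    exact hdisj a (Finset.mem_Icc.2 hra) b (Finset.mem_Icc.2 hrb)
      (ind_elem_ne k hk hi.2 hj.2 hij ha hb)
  have hSc : ∀ a ∈ S, ∃ j ∈ Finset.Icc 1 (k+2), a ∈ QevenF' P k j := by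
    intro a _
    obtain ⟨i, hi, hPi⟩ := hcover a
    rw [Finset.mem_Icc] at hi
    obtain ⟨hj1, hj2, hji⟩ := jOf_spec k hk hi.1 hi.2
    refine ⟨jOfF k i, Finset.mem_Icc.2 ⟨hj1, hj2⟩, ?_⟩
    rw [Q_eq P k hk hj1 hj2]
    exact Finset.mem_biUnion.2 ⟨i, hji, hPi⟩
  rw [nested_rank (k+2) (QevenF' P k) (sevenF' n g k) hQd hσnn S hSc]
  set x : ℕ → ℤ := sigF P S with hx
  have hyblock : ∀ s, 1 ≤ s → s ≤ k+2 →
      ((S ∩ QevenF' P k s).card : ℤ) = ∑ i ∈ indF k s, x i := by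
    intro s h1 h2
    rw [Q_eq P k hk h1 h2]
    have hsplit : S ∩ (indF k s).biUnion P = (indF k s).biUnion (fun i => S ∩ P i) := by
      ext a
      simp only [Finset.mem_inter, Finset.mem_biUnion]
      tauto
    rw [hsplit, Finset.card_biUnion]
    · push_cast
      rfl
    · intro a ha b hb hab
      have hra := ind_mem_range k hk h1 h2 ha
      have hrb := ind_mem_range k hk h1 h2 hb
      exact Finset.disjoint_of_subset_left Finset.inter_subset_right
        (Finset.disjoint_of_subset_right Finset.inter_subset_right
          (hdisj a (Finset.mem_Icc.2 hra) b (Finset.mem_Icc.2 hrb) hab))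
  have hind1 : indF k 1 = {1} := by unfold indF; rw [if_pos rfl]
  have hindk2 : indF k (k+2) = {2*k+1} := by
    unfold indF
    rw [if_neg (by omega), if_neg (by omega), if_neg (by omega)]
  have hysum : ∀ t, 1 ≤ t → t ≤ k+2 →
      ∑ s ∈ Finset.Icc t (k+2), ((S ∩ QevenF' P k s).card : ℤ)
        = ∑ i ∈ Finset.Icc (lobF k t) (2*k+1), x i := by
    intro t h1 h2
    have hcongr : ∀ s ∈ Finset.Icc t (k+2),
        ((S ∩ QevenF' P k s).card : ℤ) = ∑ i ∈ indF k s, x i := by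
      intro s hs
      rw [Finset.mem_Icc] at hs
      exact hyblock s (by omega) hs.2
    have hpd : (↑(Finset.Icc t (k+2)) : Set ℕ).PairwiseDisjoint (indF k) := by
      intro a ha b hb hab
      simp only [Finset.coe_Icc, Set.mem_Icc] at ha hb
      exact ind_disj k hk ha.2 hb.2 hab
    rw [Finset.sum_congr rfl hcongr, ← Finset.sum_biUnion hpd, biUnion_ind k hk h1 h2]
  have hσsum : ∀ t, 2 ≤ t → t ≤ k+1 →
      ∑ s ∈ Finset.Icc t (k+2), sevenF' n g k s
        = ∑ i ∈ Finset.Icc (2*t-2) (2*k+1), tauF n g k i := by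
    suffices H : ∀ j, j ≤ k - 1 →
        ∑ s ∈ Finset.Icc (k+1-j) (k+2), sevenF' n g k s
          = ∑ i ∈ Finset.Icc (2*(k+1-j)-2) (2*k+1), tauF n g k i by
      intro t h1 h2
      have h3 := H (k+1-t) (by omega)
      have e : k+1-(k+1-t) = t := by omega
      rw [e] at h3
      exact h3
    intro j
    induction j with
    | zero =>
      intro _
      simp only [Nat.sub_zero]
      have e1 : Finset.Icc (k+1) (k+2) = {k+1, k+2} := by
        ext a
        simp only [Finset.mem_Icc, Finset.mem_insert, Finset.mem_singleton]
        omega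
      have e2 : 2*(k+1)-2 = 2*k := by omega
      have e3 : Finset.Icc (2*k) (2*k+1) = {2*k, 2*k+1} := by
        ext a
        simp only [Finset.mem_Icc, Finset.mem_insert, Finset.mem_singleton]
        omega
      rw [e1, e2, e3, Finset.sum_pair (by omega), Finset.sum_pair (by omega), hσk1, hσk2]
      ring
    | succ j ih =>
      intro hj
      have h1 := ih (by omega)
      have e : k+1-(j+1) = k-j := by omega
      rw [e]
      rw [sum_Icc_cons _ (show k-j ≤ k+2 by omega)]
      have e2 : k-j+1 = k+1-j := by omega
      rw [e2, h1]
      have hσv : sevenF' n g k (k-j) = tauF n g k (2*(k-j)-2) + tauF n g k (2*(k-j)-1) := by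
        unfold sevenF'
        rw [if_neg (by omega), if_pos (by omega)]
      rw [hσv]
      rw [sum_Icc_cons (tauF n g k) (show 2*(k-j)-2 ≤ 2*k+1 by omega)]
      rw [sum_Icc_cons (tauF n g k) (show 2*(k-j)-2+1 ≤ 2*k+1 by omega)]
      have e3 : 2*(k-j)-2+1 = 2*(k-j)-1 := by omega
      rw [e3]
      have e4 : 2*(k-j)-1+1 = 2*(k+1-j)-2 := by omega
      rw [e4]
      ring
  have hexc2 : ∀ t, 2 ≤ t → t ≤ k+1 →
      (∑ s ∈ Finset.Icc t (k+2), (((S ∩ QevenF' P k s).card:ℤ) - sevenF' n g k s))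
        = ellT n g k x (2*t-2) := by
    intro t h1 h2
    rw [Finset.sum_sub_distrib, hysum t (by omega) (by omega), hσsum t h1 h2]
    have hlob : lobF k t = 2*t-2 := by
      unfold lobF
      rw [if_neg (by omega), if_pos (by omega)]
    rw [hlob]
    unfold ellT
    rw [Finset.sum_sub_distrib]
  have hexck2 :
      (∑ s ∈ Finset.Icc (k+2) (k+2), (((S ∩ QevenF' P k s).card:ℤ) - sevenF' n g k s))
        = x (2*k+1) - thetaF n g := by
    rw [Finset.Icc_self, Finset.sum_singleton, hyblock (k+2) (by omega) le_rfl, hindk2,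
      Finset.sum_singleton, hσk2]
  have hexc1 :
      (∑ s ∈ Finset.Icc 1 (k+2), (((S ∩ QevenF' P k s).card:ℤ) - sevenF' n g k s))
        = (x 1 - (n:ℤ)) + ellT n g k x 2 := by
    rw [sum_Icc_cons _ (show 1 ≤ k+2 by omega)]
    have h2 := hexc2 2 le_rfl (by omega)
    have e : 2*2-2 = 2 := rfl
    rw [e] at h2
    rw [h2, hyblock 1 (by omega) (by omega), hind1, Finset.sum_singleton, hσ1]
  set xb := truncT n g k x with hxb
  have hxbr : xb (2*k+1) = min (x (2*k+1)) (thetaF n g) := by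
    rw [hxb]
    unfold truncT
    rw [if_pos rfl]
  have hxbo : ∀ i, i ≠ 2*k+1 → xb i = x i := by
    intro i hi
    rw [hxb]
    unfold truncT
    rw [if_neg hi]
  set dd := x (2*k+1) - xb (2*k+1) with hdd
  have hddnn : 0 ≤ dd := by
    have h1 := min_le_left (x (2*k+1)) (thetaF n g)
    rw [hdd, hxbr]
    omega
  have hell : ∀ a, 1 ≤ a → a ≤ 2*k+1 → ellT n g k x a = ellT n g k xb a + dd := by
    intro a h1 h2
    have h3 : ∑ s ∈ Finset.Icc a (2*k+1), (x s - xb s) = x (2*k+1) - xb (2*k+1) := by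
      rw [Finset.sum_eq_single_of_mem (2*k+1) (Finset.mem_Icc.2 ⟨h2, le_rfl⟩)]
      intro b _ hne
      rw [hxbo b hne]
      ring
    rw [Finset.sum_sub_distrib] at h3
    unfold ellT
    rw [Finset.sum_sub_distrib, Finset.sum_sub_distrib, hdd]
    linarith
  have hsumxb : ∑ i ∈ Finset.Icc 1 (2*k+1), xb i
      = (∑ i ∈ Finset.Icc 1 (2*k+1), x i) - dd := by
    have h3 : ∑ s ∈ Finset.Icc 1 (2*k+1), (x s - xb s) = x (2*k+1) - xb (2*k+1) := by
      rw [Finset.sum_eq_single_of_mem (2*k+1) (Finset.mem_Icc.2 ⟨by omega, le_rfl⟩)]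
      intro b _ hne
      rw [hxbo b hne]
      ring
    rw [Finset.sum_sub_distrib] at h3
    rw [hdd]
    linarith
  have hScard2 : (S.card:ℤ) = ∑ i ∈ Finset.Icc 1 (2*k+1), x i := by
    rw [card_partition (Finset.Icc 1 (2*k+1)) P hdisj S (fun a _ => hcover a)]
    push_cast
    rfl
  have hx1n : x 1 ≤ (n:ℤ) := by
    have h1 : (S ∩ P 1).card ≤ (P 1).card := Finset.card_le_card Finset.inter_subset_right
    have h2 := hcard 1 (Finset.mem_Icc.2 ⟨le_rfl, by omega⟩)
    show ((S ∩ P 1).card:ℤ) ≤ (n:ℤ)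
    omega
  set F := ((Finset.Icc 1 (2*k+1)).filter (fun t => Even t)).fold max 0 (ellT n g k xb)
    with hF
  set E := (Finset.Icc 1 (k+2)).fold max 0
    (fun t => ∑ s ∈ Finset.Icc t (k+2), (((S ∩ QevenF' P k s).card:ℤ) - sevenF' n g k s))
    with hE
  have hF0 : (0:ℤ) ≤ F := by
    rw [hF]
    exact (Finset.le_fold_max _).2 (Or.inl le_rfl)
  have hE0 : (0:ℤ) ≤ E := by
    rw [hE]
    exact (Finset.le_fold_max _).2 (Or.inl le_rfl)
  have hexcE : ∀ t ∈ Finset.Icc 1 (k+2),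
      (∑ s ∈ Finset.Icc t (k+2), (((S ∩ QevenF' P k s).card:ℤ) - sevenF' n g k s)) ≤ E := by
    intro t ht
    rw [hE]
    exact (Finset.le_fold_max _).2 (Or.inr ⟨t, ht, le_rfl⟩)
  have hellF : ∀ a, 1 ≤ a → a ≤ 2*k+1 → Even a → ellT n g k xb a ≤ F := by
    intro a h1 h2 he
    rw [hF]
    exact (Finset.le_fold_max _).2
      (Or.inr ⟨a, Finset.mem_filter.2 ⟨Finset.mem_Icc.2 ⟨h1, h2⟩, he⟩, le_rfl⟩)
  have hdE : dd ≤ E := by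
    have h1 := hexcE (k+2) (Finset.mem_Icc.2 ⟨by omega, le_rfl⟩)
    rw [hexck2] at h1
    have h2 : xb (2*k+1) = min (x (2*k+1)) (thetaF n g) := hxbr
    rw [hdd]
    omega
  have hEle : E ≤ dd + F := by
    rw [hE, Finset.fold_max_le]
    refine ⟨by linarith, ?_⟩
    intro t ht
    rw [Finset.mem_Icc] at ht
    by_cases ht1 : t = 1
    · subst ht1
      rw [hexc1]
      have h2 := hell 2 (by omega) (by omega)
      have h3 := hellF 2 (by omega) (by omega) even_two
      linarith
    · by_cases ht2 : t ≤ k+1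
      · rw [hexc2 t (by omega) ht2]
        have h2 := hell (2*t-2) (by omega) (by omega)
        have h3 := hellF (2*t-2) (by omega) (by omega) ⟨t-1, by omega⟩
        linarith
      · have ht3 : t = k+2 := by omega
        subst ht3
        rw [hexck2]
        have h2 : xb (2*k+1) = min (x (2*k+1)) (thetaF n g) := hxbr
        have h3 : x (2*k+1) - thetaF n g ≤ dd := by
          rw [hdd]
          omega
        linarith
  have hFle : F ≤ E - dd := by
    rw [hF, Finset.fold_max_le]
    refine ⟨by linarith, ?_⟩
    intro a ha
    rw [Finset.mem_filter, Finset.mem_Icc] at ha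
    obtain ⟨⟨ha1, ha2⟩, hae⟩ := ha
    obtain ⟨b, hb⟩ := hae
    have he := hexcE (b+1) (Finset.mem_Icc.2 ⟨by omega, by omega⟩)
    rw [hexc2 (b+1) (by omega) (by omega)] at he
    have ea : 2*(b+1)-2 = a := by omega
    rw [ea] at he
    have h3 := hell a ha1 ha2
    linarith
  have hEF : E = dd + F := le_antisymm hEle (by linarith)
  rw [hScard2, hEF, hsumxb]
  ring
end

section
/- The maximum cardinality of a set that is independent in both M_odd and the dual matroid M_even* equals C + min_{S ⊆ U} f(S), where C = |U| − rk_{M_even}(U) and f(S) = h(x) for the signature x of S, with h(x) = Σ_{i=1}^{r} x_i − max(0, max_{odd a, 1 ≤ a ≤ r} ℓ_a(x)) − max(0, max_{even a, 1 ≤ a ≤ r} ℓ_a(x)). -/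
/-- `h(x) = Σ_i x_i − max(0, max_{odd a} ℓ_a(x)) − max(0, max_{even a} ℓ_a(x))`,
for `r = 2k+1`. -/
def hT (n g k : ℕ) (x : ℕ → ℤ) : ℤ :=
  (∑ j ∈ Finset.Icc 1 (2 * k + 1), x j)
    - ((Finset.Icc 1 (2 * k + 1)).filter (fun t => Odd t)).fold max 0 (ellT n g k x)
    - ((Finset.Icc 1 (2 * k + 1)).filter (fun t => Even t)).fold max 0 (ellT n g k x)

set_option linter.unusedSectionVars false
set_option linter.unusedVariables false
set_option maxHeartbeats 1000000
open Finset


lemma sum_Icc_split_one (f : ℕ → ℤ) {a b : ℕ} (h : a ≤ b) :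
    ∑ i ∈ Icc a b, f i = f a + ∑ i ∈ Icc (a+1) b, f i := by
  have : Icc a b = insert a (Icc (a+1) b) := by ext x; simp; omega
  rw [this, Finset.sum_insert (by simp)]

lemma sum_Icc_split_two (f : ℕ → ℤ) {a b : ℕ} (h : a + 1 ≤ b) :
    ∑ i ∈ Icc a b, f i = f a + f (a+1) + ∑ i ∈ Icc (a+2) b, f i := by
  rw [sum_Icc_split_one f (by omega), sum_Icc_split_one f (by omega)]
  ring

lemma sum_Icc_cat (f : ℕ → ℤ) {a b c : ℕ} (h1 : a ≤ b + 1) (h2 : b ≤ c) :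
    ∑ i ∈ Icc a c, f i = (∑ i ∈ Icc a b, f i) + ∑ i ∈ Icc (b+1) c, f i := by
  rw [← Finset.sum_union (by rw [Finset.disjoint_left]; intro x hx hy; simp at hx hy; omega)]
  congr 1
  ext x; simp; omega

lemma pair_sum_odd (f : ℕ → ℤ) (t : ℕ) (ht : 1 ≤ t) : ∀ K : ℕ,
    ∑ s ∈ Icc t K, (f (2*s-1) + f (2*s)) = ∑ i ∈ Icc (2*t-1) (2*K), f i := by
  intro K
  induction K with
  | zero => rw [Finset.Icc_eq_empty (by omega), Finset.Icc_eq_empty (by omega)]; simp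
  | succ K ih =>
    by_cases hK : t ≤ K + 1
    · rw [Finset.sum_Icc_succ_top hK]
      have h2 : 2*(K+1) = (2*K+1) + 1 := by ring
      have h1 : 2*t-1 ≤ 2*K+1 := by omega
      rw [h2, Finset.sum_Icc_succ_top (by omega), Finset.sum_Icc_succ_top (by omega), ih]
      simp [Nat.add_sub_cancel]; ring
    · rw [Finset.Icc_eq_empty (by omega), Finset.Icc_eq_empty (by omega)]; simp

lemma pair_sum_even (f : ℕ → ℤ) (t : ℕ) (ht : 2 ≤ t) : ∀ K : ℕ,
    ∑ s ∈ Icc t K, (f (2*s-2) + f (2*s-1)) = ∑ i ∈ Icc (2*t-2) (2*K-1), f i := by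
  intro K
  induction K with
  | zero => rw [Finset.Icc_eq_empty (by omega), Finset.Icc_eq_empty (by omega)]; simp
  | succ K ih =>
    by_cases hK : t ≤ K + 1
    · have hK1 : 1 ≤ K := by omega
      rw [Finset.sum_Icc_succ_top hK]
      have e1 : 2*(K+1)-2 = 2*K-1+1 := by omega
      have e2 : 2*(K+1)-1 = 2*K-1+1+1 := by omega
      rw [e1, e2, Finset.sum_Icc_succ_top (by omega), Finset.sum_Icc_succ_top (by omega), ih]
      ring
    · rw [Finset.Icc_eq_empty (by omega), Finset.Icc_eq_empty (by omega)]; simp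

lemma fold_max_cases (s : Finset ℕ) (f : ℕ → ℤ) :
    s.fold max 0 f = 0 ∨ ∃ a ∈ s, s.fold max 0 f = f a := by
  induction s using Finset.induction_on with
  | empty => left; rfl
  | @insert a s ha ih =>
    rw [Finset.fold_insert ha]
    rcases le_total (f a) (s.fold max 0 f) with hle | hle
    · rw [max_eq_right hle]
      rcases ih with h0 | ⟨b, hb, he⟩
      · left; exact h0
      · right; exact ⟨b, by simp [hb], he⟩
    · right; exact ⟨a, by simp, max_eq_left hle⟩

set_option linter.unusedSectionVars false
set_option linter.unusedVariables false

section S2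
variable {α : Type*} [Fintype α] [DecidableEq α]

lemma card_inter_union (I A B : Finset α) (hab : Disjoint A B) :
    ((I ∩ (A ∪ B)).card : ℤ) = ((I ∩ A).card : ℤ) + ((I ∩ B).card : ℤ) := by
  rw [Finset.inter_union_distrib_left, Finset.card_union_of_disjoint
    (hab.mono (Finset.inter_subset_right) (Finset.inter_subset_right))]
  push_cast; ring

lemma sig_sum_eq (k n : ℕ) (P : ℕ → Finset α)
    (hdisj : ∀ i ∈ Finset.Icc 1 (2 * k + 1), ∀ j ∈ Finset.Icc 1 (2 * k + 1),
        i ≠ j → Disjoint (P i) (P j))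
    (hcover : ∀ a : α, ∃ i ∈ Finset.Icc 1 (2 * k + 1), a ∈ P i)
    (S : Finset α) :
    ∑ i ∈ Icc 1 (2*k+1), ((S ∩ P i).card : ℤ) = S.card := by
  have hS : S = (Icc 1 (2*k+1)).biUnion (fun i => S ∩ P i) := by
    ext x
    simp only [Finset.mem_biUnion, Finset.mem_inter]
    constructor
    · intro hx
      obtain ⟨i, hi, hxi⟩ := hcover x
      exact ⟨i, hi, hx, hxi⟩
    · rintro ⟨i, _, hx, _⟩; exact hx
  have hcard : S.card = ∑ i ∈ Icc 1 (2*k+1), (S ∩ P i).card := by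
    conv_lhs => rw [hS]
    exact Finset.card_biUnion (fun i hi j hj hij =>
      (hdisj i hi j hj hij).mono Finset.inter_subset_right Finset.inter_subset_right)
  rw [hcard]; push_cast; ring

lemma card_univ_eq (k n : ℕ) (P : ℕ → Finset α)
    (hdisj : ∀ i ∈ Finset.Icc 1 (2 * k + 1), ∀ j ∈ Finset.Icc 1 (2 * k + 1),
        i ≠ j → Disjoint (P i) (P j))
    (hcover : ∀ a : α, ∃ i ∈ Finset.Icc 1 (2 * k + 1), a ∈ P i)
    (hcard : ∀ i ∈ Finset.Icc 1 (2 * k + 1), (P i).card = n) :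
    (Fintype.card α : ℤ) = (2*k+1) * n := by
  have := sig_sum_eq k n P hdisj hcover (Finset.univ)
  rw [Finset.card_univ] at this
  rw [← this]
  have h1 : ∀ i ∈ Icc 1 (2*k+1), ((Finset.univ ∩ P i).card : ℤ) = (n:ℤ) :=
    fun i hi => by rw [Finset.univ_inter, hcard i hi]
  rw [Finset.sum_congr rfl h1, Finset.sum_const, Nat.card_Icc, nsmul_eq_mul]
  push_cast
  ring

lemma compl_inter_card (n k : ℕ) (P : ℕ → Finset α)
    (hcard : ∀ i ∈ Finset.Icc 1 (2 * k + 1), (P i).card = n)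
    (I : Finset α) (i : ℕ) (hi : i ∈ Finset.Icc 1 (2*k+1)) :
    (((Finset.univ \ I) ∩ P i).card : ℤ) = (n : ℤ) - ((I ∩ P i).card : ℤ) := by
  have h1 : (Finset.univ \ I) ∩ P i = P i \ (I ∩ P i) := by
    ext x; simp [Finset.mem_sdiff, Finset.mem_inter]; tauto
  rw [h1, Finset.card_sdiff_of_subset (Finset.inter_subset_right)]
  have h2 : (I ∩ P i).card ≤ (P i).card := Finset.card_le_card Finset.inter_subset_right
  rw [hcard i hi] at h2 ⊢
  push_cast [h2]
  omega

lemma exists_with_sig (k n : ℕ) (P : ℕ → Finset α)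
    (hdisj : ∀ i ∈ Finset.Icc 1 (2 * k + 1), ∀ j ∈ Finset.Icc 1 (2 * k + 1),
        i ≠ j → Disjoint (P i) (P j))
    (hcard : ∀ i ∈ Finset.Icc 1 (2 * k + 1), (P i).card = n)
    (y : ℕ → ℕ) (hy : ∀ i ∈ Finset.Icc 1 (2*k+1), y i ≤ n) :
    ∃ I : Finset α, ∀ i ∈ Finset.Icc 1 (2*k+1), (I ∩ P i).card = y i := by
  have hex : ∀ i ∈ Finset.Icc 1 (2*k+1), ∃ J : Finset α, J ⊆ P i ∧ J.card = y i := by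
    intro i hi
    exact Finset.exists_subset_card_eq (n := y i) (by rw [hcard i hi]; exact hy i hi)
  choose! J hJsub hJcard using hex
  refine ⟨(Icc 1 (2*k+1)).biUnion J, fun i hi => ?_⟩
  have : (Icc 1 (2*k+1)).biUnion J ∩ P i = J i := by
    ext x
    simp only [Finset.mem_inter, Finset.mem_biUnion]
    constructor
    · rintro ⟨⟨j, hj, hxj⟩, hxP⟩
      by_cases hij : j = i
      · exact hij ▸ hxj
      · exact absurd hxP (Finset.disjoint_left.mp (hdisj j hj i hi hij) (hJsub j hj hxj))
    · intro hx
      exact ⟨⟨i, hi, hx⟩, hJsub i hi hx⟩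
  rw [this, hJcard i hi]

end S2
section S3
variable {α : Type*} [Fintype α] [DecidableEq α]

lemma reindex_odd (f : ℕ → ℤ) (t k : ℕ) (h1 : 1 ≤ t) (h2 : t ≤ k+1) :
    ∑ s ∈ Icc t (k+1), (if s ≤ k then f (2*s-1) + f (2*s) else f (2*k+1))
      = ∑ i ∈ Icc (2*t-1) (2*k+1), f i := by
  rw [Finset.sum_Icc_succ_top h2]
  rw [if_neg (by omega)]
  have h3 : ∀ s ∈ Icc t k, (if s ≤ k then f (2*s-1) + f (2*s) else f (2*k+1)) = f (2*s-1) + f (2*s) := by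
    intro s hs; rw [if_pos (by simp at hs; omega)]
  rw [Finset.sum_congr rfl h3, pair_sum_odd f t h1 k,
    Finset.sum_Icc_succ_top (show 2*t-1 ≤ 2*k+1 by omega) f]

lemma reindex_even (f : ℕ → ℤ) (t k : ℕ) (h1 : 2 ≤ t) (h2 : t ≤ k+1) :
    ∑ s ∈ Icc t (k+1), (f (2*s-2) + f (2*s-1)) = ∑ i ∈ Icc (2*t-2) (2*k+1), f i := by
  rw [pair_sum_even f t h1 (k+1)]
  congr 1

lemma nindep_odd_iff (n g k : ℕ) (P : ℕ → Finset α)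
    (hdisj : ∀ i ∈ Finset.Icc 1 (2 * k + 1), ∀ j ∈ Finset.Icc 1 (2 * k + 1),
        i ≠ j → Disjoint (P i) (P j))
    (I : Finset α) :
    NIndep (k + 1) (QoddF P k) (soddF n g k) I ↔
      ∀ t ∈ Finset.Icc 1 (k+1),
        (∑ i ∈ Icc (2*t-1) (2*k+1), ((I ∩ P i).card : ℤ))
          ≤ ∑ i ∈ Icc (2*t-1) (2*k+1), tauF n g k i := by
  unfold NIndep
  apply forall₂_congr
  intro t ht
  simp only [Finset.mem_Icc] at ht
  have hL : ∑ s ∈ Icc t (k+1), ((I ∩ QoddF P k s).card : ℤ)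
      = ∑ i ∈ Icc (2*t-1) (2*k+1), ((I ∩ P i).card : ℤ) := by
    rw [← reindex_odd (fun i => ((I ∩ P i).card : ℤ)) t k ht.1 ht.2]
    apply Finset.sum_congr rfl
    intro s hs
    simp only [Finset.mem_Icc] at hs
    unfold QoddF
    by_cases hsk : s ≤ k
    · simp only [if_pos hsk]
      exact card_inter_union I _ _ (hdisj (2*s-1) (by simp; omega) (2*s) (by simp; omega) (by omega))
    · simp only [if_neg hsk]
  have hR : ∑ s ∈ Icc t (k+1), soddF n g k s = ∑ i ∈ Icc (2*t-1) (2*k+1), tauF n g k i := by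
    rw [← reindex_odd (tauF n g k) t k ht.1 ht.2]
    apply Finset.sum_congr rfl
    intro s hs
    unfold soddF
    by_cases hsk : s ≤ k <;> simp [hsk]
  rw [hL, hR]

lemma nindep_even_iff (n g k : ℕ) (hk : 1 ≤ k) (P : ℕ → Finset α)
    (hdisj : ∀ i ∈ Finset.Icc 1 (2 * k + 1), ∀ j ∈ Finset.Icc 1 (2 * k + 1),
        i ≠ j → Disjoint (P i) (P j))
    (I : Finset α) :
    NIndep (k + 1) (QevenF P k) (sevenF n g k) I ↔
      ((((I ∩ P 1).card : ℤ) + ∑ i ∈ Icc 2 (2*k+1), ((I ∩ P i).card : ℤ)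
          ≤ (n : ℤ) + ∑ i ∈ Icc 2 (2*k+1), tauF n g k i) ∧
       ∀ t ∈ Finset.Icc 2 (k+1),
        (∑ i ∈ Icc (2*t-2) (2*k+1), ((I ∩ P i).card : ℤ))
          ≤ ∑ i ∈ Icc (2*t-2) (2*k+1), tauF n g k i) := by
  have hQ1 : QevenF P k 1 = P 1 := by unfold QevenF; simp
  have hs1 : sevenF n g k 1 = (n:ℤ) := by unfold sevenF; simp
  have hkey : ∀ t, 2 ≤ t → t ≤ k+1 →
      (∑ s ∈ Icc t (k+1), ((I ∩ QevenF P k s).card : ℤ)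
        = ∑ i ∈ Icc (2*t-2) (2*k+1), ((I ∩ P i).card : ℤ))
      ∧ (∑ s ∈ Icc t (k+1), sevenF n g k s = ∑ i ∈ Icc (2*t-2) (2*k+1), tauF n g k i) := by
    intro t ht1 ht2
    constructor
    · rw [← reindex_even (fun i => ((I ∩ P i).card : ℤ)) t k ht1 ht2]
      apply Finset.sum_congr rfl
      intro s hs
      simp only [Finset.mem_Icc] at hs
      unfold QevenF
      rw [if_neg (by omega)]
      exact card_inter_union I _ _ (hdisj (2*s-2) (by simp; omega) (2*s-1) (by simp; omega) (by omega))
    · rw [← reindex_even (tauF n g k) t k ht1 ht2]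
      apply Finset.sum_congr rfl
      intro s hs
      simp only [Finset.mem_Icc] at hs
      unfold sevenF
      rw [if_neg (by omega)]
  have h2k : (2:ℕ) ≤ k + 1 := by omega
  have e12 : (1:ℕ) + 1 = 2 := rfl
  have e22 : 2*2-2 = 2 := rfl
  unfold NIndep
  constructor
  · intro h
    constructor
    · have h1 := h 1 (by simp)
      rw [sum_Icc_split_one _ (by omega), sum_Icc_split_one (sevenF n g k) (by omega),
        hQ1, hs1] at h1
      simp only [e12] at h1
      rw [(hkey 2 le_rfl h2k).1, (hkey 2 le_rfl h2k).2] at h1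
      simpa only [e22] using h1
    · intro t ht
      simp only [Finset.mem_Icc] at ht
      have h1 := h t (by simp; omega)
      rw [(hkey t ht.1 ht.2).1, (hkey t ht.1 ht.2).2] at h1
      exact h1
  · rintro ⟨h1, h2⟩ t ht
    simp only [Finset.mem_Icc] at ht
    by_cases ht1 : t = 1
    · subst ht1
      rw [sum_Icc_split_one _ (by omega), sum_Icc_split_one (sevenF n g k) (by omega),
        hQ1, hs1]
      simp only [e12]
      rw [(hkey 2 le_rfl h2k).1, (hkey 2 le_rfl h2k).2]
      simpa only [e22] using h1
    · have := h2 t (by simp; omega)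
      rw [(hkey t (by omega) ht.2).1, (hkey t (by omega) ht.2).2]
      exact this

end S3
section S4

/-- numeric optimal signature -/
def yN (n g k dn : ℕ) : ℕ → ℕ :=
  fun i => if i = 1 then 0 else if i = 2*k then n - dn else if 2 ∣ i then n else 2*g

lemma tau_eval (n g k en g4 : ℕ) (hn : n = 2*en) (hg : g = 4*g4) (i : ℕ) :
    tauF n g k i = if i = 2*k+1 then ((en:ℤ) - 4*g4) + (g4:ℤ)*(2*(k:ℤ)+1)
      else ((en:ℤ) - 4*g4) := by
  subst hn hg
  unfold tauF
  have h2 : ((2*en : ℕ) : ℤ) / 2 = (en:ℤ) := by push_cast; omega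
  have h4 : ((4*g4 : ℕ):ℤ) * (2*(k:ℤ)+1) / 4 = (g4:ℤ)*(2*(k:ℤ)+1) := by
    push_cast
    rw [show (4:ℤ)*(g4:ℤ)*(2*(k:ℤ)+1) = 4*((g4:ℤ)*(2*(k:ℤ)+1)) by ring]
    omega
  by_cases hi : i = 2*k+1
  · rw [if_pos hi, if_pos hi, h2, h4]; push_cast; ring
  · rw [if_neg hi, if_neg hi, h2]; push_cast; ring

variable (n g k en g4 : ℕ)

lemma tau_sum (hn : n = 2*en) (hg : g = 4*g4) :
    ∀ j, j ≤ k → ∑ i ∈ Icc (2*(k-j)+1) (2*k+1), tauF n g k i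
      = (2*(j:ℤ)+1) * ((en:ℤ) - 4*g4) + (g4:ℤ)*(2*(k:ℤ)+1) := by
  intro j
  induction j with
  | zero =>
    intro _
    have e : 2*(k-0)+1 = 2*k+1 := by omega
    rw [e, Finset.Icc_self, Finset.sum_singleton, tau_eval n g k en g4 hn hg, if_pos rfl]
    push_cast; ring
  | succ j ih =>
    intro hj
    have e2 : 2*(k-(j+1))+1+2 = 2*(k-j)+1 := by omega
    rw [sum_Icc_split_two _ (by omega), e2, ih (by omega),
      tau_eval n g k en g4 hn hg, tau_eval n g k en g4 hn hg,
      if_neg (by omega), if_neg (by omega)]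
    push_cast; ring

lemma tau_sum2 (hk : 1 ≤ k) (hn : n = 2*en) (hg : g = 4*g4) :
    ∑ i ∈ Icc 2 (2*k+1), tauF n g k i
      = 2*(k:ℤ) * ((en:ℤ) - 4*g4) + (g4:ℤ)*(2*(k:ℤ)+1) := by
  have e3 : (2:ℕ)+1 = 2*(k-(k-1))+1 := by omega
  rw [sum_Icc_split_one _ (by omega), e3, tau_sum n g k en g4 hn hg (k-1) (by omega),
    tau_eval n g k en g4 hn hg, if_neg (by omega)]
  have : ((k:ℤ) - 1) = ((k-1 : ℕ) : ℤ) := by push_cast [hk]; ring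
  push_cast [hk]
  ring

lemma y_le (dn : ℕ) (hgn : 2*g ≤ n) (hdn : dn ≤ n) : ∀ i, yN n g k dn i ≤ n := by
  intro i
  unfold yN
  split_ifs <;> omega

lemma y_sum_top (dn : ℕ) (hk : 1 ≤ k) :
    ∑ i ∈ Icc (2*k+1) (2*k+1), ((yN n g k dn i : ℕ) : ℤ) = 2*(g:ℤ) := by
  rw [Finset.Icc_self, Finset.sum_singleton]
  unfold yN
  rw [if_neg (by omega), if_neg (by omega), if_neg (by omega)]
  push_cast; ring

lemma y_sum_mid (dn : ℕ) (hk : 1 ≤ k) (hdn : dn ≤ n) :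
    ∀ j, j + 2 ≤ k → ∑ i ∈ Icc (2*(k-j)-1) (2*k+1), ((yN n g k dn i : ℕ) : ℤ)
      = ((j:ℤ)+1)*((n:ℤ)+2*(g:ℤ)) + 2*(g:ℤ) - (dn:ℤ) := by
  intro j
  induction j with
  | zero =>
    intro hj
    have e : 2*(k-0)-1 = (2*k-1) := by omega
    have e1 : 2*k-1+1 = 2*k := by omega
    have e2 : 2*k-1+2 = 2*k+1 := by omega
    rw [e, sum_Icc_split_two _ (by omega), e1, e2, y_sum_top n g k dn hk]
    unfold yN
    rw [if_neg (by omega), if_neg (by omega), if_neg (by omega : ¬ (2 ∣ 2*k-1)),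
      if_neg (by omega), if_pos rfl]
    push_cast [hdn]; ring
  | succ j ih =>
    intro hj
    have e2 : 2*(k-(j+1))-1+2 = 2*(k-j)-1 := by omega
    have e1 : 2*(k-(j+1))-1+1 = 2*(k-(j+1)) := by omega
    rw [sum_Icc_split_two _ (by omega), e2, e1, ih (by omega)]
    unfold yN
    rw [if_neg (by omega), if_neg (by omega), if_neg (by omega : ¬ (2 ∣ 2*(k-(j+1))-1)),
      if_neg (by omega), if_neg (by omega), if_pos (by omega : 2 ∣ 2*(k-(j+1)))]
    push_cast; ring

lemma y_sum_all (dn : ℕ) (hk : 1 ≤ k) (hdn : dn ≤ n) :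
    ∑ i ∈ Icc 1 (2*k+1), ((yN n g k dn i : ℕ) : ℤ)
      = (k:ℤ)*((n:ℤ)+2*(g:ℤ)) - (dn:ℤ) := by
  by_cases hk1 : k = 1
  · subst hk1
    rw [sum_Icc_split_two _ (by omega)]
    have : (1:ℕ)+2 = 2*1+1 := rfl
    rw [this, y_sum_top n g 1 dn hk]
    unfold yN
    rw [if_pos rfl, if_neg (by omega), if_pos (by omega : 1+1 = 2*1)]
    push_cast [hdn]; ring
  · rw [sum_Icc_split_two _ (by omega)]
    have e : (1:ℕ)+2 = 2*(k-(k-2))-1 := by omega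
    rw [e, y_sum_mid n g k dn hk hdn (k-2) (by omega)]
    unfold yN
    rw [if_pos rfl, if_neg (by omega), if_neg (by omega), if_pos (by omega : 2 ∣ 1+1)]
    have : ((k-2:ℕ):ℤ) = (k:ℤ)-2 := by push_cast [show 2 ≤ k by omega]; ring
    rw [this]
    push_cast; ring

lemma z_sum (dn : ℕ) (hk : 1 ≤ k) (hdn : dn ≤ n) (hn : n = 2*en) (hg : g = 4*g4)
    (hd : (dn:ℤ) = (g4:ℤ)*(2*(k:ℤ)+1)) :
    ∀ j, j + 1 ≤ k → ∑ i ∈ Icc (2*(k-j)) (2*k+1), ((n:ℤ) - ((yN n g k dn i : ℕ) : ℤ))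
      = ∑ i ∈ Icc (2*(k-j)) (2*k+1), tauF n g k i := by
  intro j
  induction j with
  | zero =>
    intro hj
    have e : 2*(k-0) = 2*k := by omega
    have e1 : 2*k+1 = 2*k+1 := rfl
    rw [e, sum_Icc_split_one _ (by omega), sum_Icc_split_one (tauF n g k) (by omega),
      Finset.Icc_self, Finset.sum_singleton, Finset.sum_singleton,
      tau_eval n g k en g4 hn hg, tau_eval n g k en g4 hn hg,
      if_neg (by omega), if_pos rfl]
    unfold yN
    rw [if_neg (by omega), if_pos rfl, if_neg (by omega), if_neg (by omega),
      if_neg (by omega : ¬ (2 ∣ 2*k+1))]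
    push_cast [hdn]
    rw [hd]
    subst hn hg
    push_cast
    ring
  | succ j ih =>
    intro hj
    have e2 : 2*(k-(j+1))+2 = 2*(k-j) := by omega
    have e1 : 2*(k-(j+1))+1 = 2*(k-(j+1))+1 := rfl
    rw [sum_Icc_split_two _ (by omega), sum_Icc_split_two (tauF n g k) (by omega),
      e2, ih (by omega), tau_eval n g k en g4 hn hg, tau_eval n g k en g4 hn hg,
      if_neg (by omega), if_neg (by omega)]
    unfold yN
    rw [if_neg (by omega), if_neg (by omega), if_pos (by omega : 2 ∣ 2*(k-(j+1))),
      if_neg (by omega), if_neg (by omega), if_neg (by omega : ¬ (2 ∣ 2*(k-(j+1))+1))]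
    subst hn hg
    push_cast
    ring

end S4
section S5

lemma fold_max_nonneg (s : Finset ℕ) (f : ℕ → ℤ) : (0:ℤ) ≤ s.fold max 0 f := by
  induction s using Finset.induction_on with
  | empty => simp
  | @insert a s ha ih => rw [Finset.fold_insert ha]; exact le_max_of_le_right ih

variable (n g k en g4 : ℕ)

lemma y_odd_ineq (dn : ℕ) (hk : 1 ≤ k) (hn : n = 2*en) (hg : g = 4*g4)
    (hd : dn = g4*(2*k+1)) (hbig : 10*g4*(2*k+1) ≤ en) :
    ∀ t ∈ Icc 1 (k+1), ∑ i ∈ Icc (2*t-1) (2*k+1), ((yN n g k dn i : ℕ) : ℤ)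
      ≤ ∑ i ∈ Icc (2*t-1) (2*k+1), tauF n g k i := by
  have hdn : dn ≤ n := by
    calc dn = g4*(2*k+1) := hd
    _ ≤ 10*g4*(2*k+1) := by nlinarith
    _ ≤ en := hbig
    _ ≤ n := by omega
  have hkz : (1:ℤ) ≤ (k:ℤ) := by exact_mod_cast hk
  have hbz : 20*((k:ℤ)*(g4:ℤ)) + 10*(g4:ℤ) ≤ (en:ℤ) := by
    have : ((10*g4*(2*k+1):ℕ):ℤ) ≤ ((en:ℕ):ℤ) := by exact_mod_cast hbig
    push_cast at this
    nlinarith [this]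
  have hg4z : (0:ℤ) ≤ (g4:ℤ) := Int.natCast_nonneg g4
  have hkg4 : (0:ℤ) ≤ (k:ℤ)*(g4:ℤ) := mul_nonneg (by linarith) hg4z
  have hnz : (n:ℤ) = 2*(en:ℤ) := by exact_mod_cast hn
  have hgz : (g:ℤ) = 4*(g4:ℤ) := by exact_mod_cast hg
  have hdz : (dn:ℤ) = 2*((k:ℤ)*(g4:ℤ)) + (g4:ℤ) := by
    have : ((dn:ℕ):ℤ) = ((g4*(2*k+1):ℕ):ℤ) := by exact_mod_cast hd
    push_cast at this
    linarith [this]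
  intro t ht
  simp only [Finset.mem_Icc] at ht
  by_cases ht1 : t = 1
  · subst ht1
    have e : 2*1-1 = 1 := rfl
    rw [e]
    have htt := tau_sum n g k en g4 hn hg k le_rfl
    rw [show 2*(k-k)+1 = 1 from by omega] at htt
    rw [y_sum_all n g k dn hk hdn, htt]
    have p1 : (k:ℤ)*((n:ℤ)+2*(g:ℤ)) = 2*((k:ℤ)*(en:ℤ)) + 8*((k:ℤ)*(g4:ℤ)) := by
      rw [hnz, hgz]; ring
    have p2 : (2*(k:ℤ)+1)*((en:ℤ)-4*(g4:ℤ)) + (g4:ℤ)*(2*(k:ℤ)+1)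
        = 2*((k:ℤ)*(en:ℤ)) + (en:ℤ) - 8*((k:ℤ)*(g4:ℤ)) - 4*(g4:ℤ) + 2*((k:ℤ)*(g4:ℤ)) + (g4:ℤ) := by
      ring
    rw [p1, p2, hdz]
    linarith
  · by_cases htk : t = k+1
    · subst htk
      have e : 2*(k+1)-1 = 2*k+1 := by omega
      rw [e, y_sum_top n g k dn hk]
      have htt := tau_sum n g k en g4 hn hg 0 (by omega)
      rw [show 2*(k-0)+1 = 2*k+1 from by omega] at htt
      rw [htt]
      have hkg4' : (g4:ℤ) ≤ (k:ℤ)*(g4:ℤ) := le_mul_of_one_le_left hg4z hkz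
      rw [hgz]
      push_cast
      linarith
    · have ht2 : 2 ≤ t := by omega
      have htk' : t ≤ k := by omega
      set j := k - t with hj
      have hjk : j + 2 ≤ k := by omega
      have e : 2*t-1 = 2*(k-j)-1 := by omega
      rw [e, y_sum_mid n g k dn hk hdn j hjk]
      have htt := tau_sum n g k en g4 hn hg (j+1) (by omega)
      rw [show 2*(k-(j+1))+1 = 2*(k-j)-1 from by omega] at htt
      rw [htt]
      have hjz : (j:ℤ) ≤ (k:ℤ) - 2 := by
        have h2 : ((k - t : ℕ):ℤ) = (k:ℤ) - (t:ℤ) := by push_cast [htk']; ring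
        have h3 : (2:ℤ) ≤ (t:ℤ) := by exact_mod_cast ht2
        rw [hj, h2]; linarith
      have hjnn : (0:ℤ) ≤ (j:ℤ) := Int.natCast_nonneg j
      have q3 : (j:ℤ)*(g4:ℤ) ≤ (k:ℤ)*(g4:ℤ) - 2*(g4:ℤ) := by
        nlinarith [mul_le_mul_of_nonneg_right hjz hg4z]
      push_cast
      rw [hgz, hnz, hdz]
      ring_nf
      linarith [q3, hbz, hg4z, hjnn, hkg4]

lemma hT_nonneg_of (hk : 1 ≤ k) (hn : n = 2*en) (hg : g = 4*g4)
    (hbig : 10*g4*(2*k+1) ≤ en)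
    (x : ℕ → ℤ) (hx0 : ∀ i, 0 ≤ x i) (hxn : ∀ i ∈ Icc 1 (2*k+1), x i ≤ n) :
    0 ≤ hT n g k x := by
  have hkz : (1:ℤ) ≤ (k:ℤ) := by exact_mod_cast hk
  have hbz : 20*((k:ℤ)*(g4:ℤ)) + 10*(g4:ℤ) ≤ (en:ℤ) := by
    have : ((10*g4*(2*k+1):ℕ):ℤ) ≤ ((en:ℕ):ℤ) := by exact_mod_cast hbig
    push_cast at this
    nlinarith [this]
  have hg4z : (0:ℤ) ≤ (g4:ℤ) := Int.natCast_nonneg g4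
  have hkg4 : (0:ℤ) ≤ (k:ℤ)*(g4:ℤ) := mul_nonneg (by linarith) hg4z
  have hnz : (n:ℤ) = 2*(en:ℤ) := by exact_mod_cast hn
  have hgz : (g:ℤ) = 4*(g4:ℤ) := by exact_mod_cast hg
  have htau_ge : ∀ i, ((en:ℤ) - 4*g4) ≤ tauF n g k i := by
    intro i
    rw [tau_eval n g k en g4 hn hg]
    split_ifs
    · nlinarith
    · linarith
  have htau_nonneg : ∀ i, 0 ≤ tauF n g k i := by
    intro i; have := htau_ge i; linarith
  have hsx_nonneg : 0 ≤ ∑ i ∈ Icc 1 (2*k+1), x i :=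
    Finset.sum_nonneg (fun i _ => hx0 i)
  have hell_le : ∀ u, 1 ≤ u → u ≤ 2*k+1 → ellT n g k x u ≤ ∑ i ∈ Icc 1 (2*k+1), x i := by
    intro u hu1 hu2
    unfold ellT
    have h1 : ∑ i ∈ Icc u (2*k+1), (x i - tauF n g k i) ≤ ∑ i ∈ Icc u (2*k+1), x i :=
      Finset.sum_le_sum (fun i _ => by have := htau_nonneg i; linarith)
    have h2 : ∑ i ∈ Icc u (2*k+1), x i ≤ ∑ i ∈ Icc 1 (2*k+1), x i := by
      apply Finset.sum_le_sum_of_subset_of_nonneg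
      · intro i hi; simp only [Finset.mem_Icc] at *; omega
      · intro i _ _; exact hx0 i
    linarith
  have hell_pair : ∀ u v, 1 ≤ u → u < v → v ≤ 2*k+1 →
      ellT n g k x u + ellT n g k x v ≤ ∑ i ∈ Icc 1 (2*k+1), x i := by
    intro u v hu huv hv
    have split1 : ∑ i ∈ Icc 1 (2*k+1), x i
        = (∑ i ∈ Icc 1 (u-1), x i) + ∑ i ∈ Icc u (2*k+1), x i := by
      have h := sum_Icc_cat x (a := 1) (b := u-1) (c := 2*k+1) (by omega) (by omega)
      rw [show u-1+1 = u from by omega] at h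
      exact h
    have split2 : ∑ i ∈ Icc u (2*k+1), x i
        = (∑ i ∈ Icc u (v-1), x i) + ∑ i ∈ Icc v (2*k+1), x i := by
      have h := sum_Icc_cat x (a := u) (b := v-1) (c := 2*k+1) (by omega) (by omega)
      rw [show v-1+1 = v from by omega] at h
      exact h
    have split3 : ∑ i ∈ Icc u (2*k+1), (x i - tauF n g k i)
        = (∑ i ∈ Icc u (v-1), (x i - tauF n g k i))
          + ∑ i ∈ Icc v (2*k+1), (x i - tauF n g k i) := by
      have h := sum_Icc_cat (fun i => x i - tauF n g k i) (a := u) (b := v-1) (c := 2*k+1)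
        (by omega) (by omega)
      rw [show v-1+1 = v from by omega] at h
      exact h
    have hbound1 : ∑ i ∈ Icc u (v-1), (x i - tauF n g k i)
        ≤ (∑ i ∈ Icc u (v-1), x i) - ((en:ℤ) - 4*g4) := by
      rw [Finset.sum_sub_distrib]
      have : ((en:ℤ) - 4*g4) ≤ ∑ i ∈ Icc u (v-1), tauF n g k i := by
        calc ((en:ℤ) - 4*g4) ≤ tauF n g k u := htau_ge u
        _ ≤ ∑ i ∈ Icc u (v-1), tauF n g k i :=
            Finset.single_le_sum (fun i _ => htau_nonneg i) (by simp; omega)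
      linarith
    have hbound2 : ∑ i ∈ Icc v (2*k+1), (x i - 2*tauF n g k i) ≤ (2*(k:ℤ)+1) * (2*(g:ℤ)) := by
      have hterm : ∀ i ∈ Icc v (2*k+1), x i - 2*tauF n g k i ≤ 2*(g:ℤ) := by
        intro i hi
        have h1 := htau_ge i
        have h2 : x i ≤ (n:ℤ) := hxn i (by simp at hi ⊢; omega)
        rw [hgz]
        rw [hnz] at h2
        linarith
      calc ∑ i ∈ Icc v (2*k+1), (x i - 2*tauF n g k i)
          ≤ ∑ i ∈ Icc v (2*k+1), (2*(g:ℤ)) := Finset.sum_le_sum hterm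
        _ = ((Icc v (2*k+1)).card : ℤ) * (2*(g:ℤ)) := by rw [Finset.sum_const]; push_cast; ring
        _ ≤ (2*(k:ℤ)+1) * (2*(g:ℤ)) := by
            apply mul_le_mul_of_nonneg_right _ (by rw [hgz]; linarith)
            rw [Nat.card_Icc]
            push_cast
            omega
    have hdecomp : 2 * ∑ i ∈ Icc v (2*k+1), (x i - tauF n g k i)
        = (∑ i ∈ Icc v (2*k+1), (x i - 2*tauF n g k i)) + ∑ i ∈ Icc v (2*k+1), x i := by
      rw [← Finset.sum_add_distrib, Finset.mul_sum]
      apply Finset.sum_congr rfl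
      intro i _
      ring
    have key : ellT n g k x u + ellT n g k x v
        = (∑ i ∈ Icc u (v-1), (x i - tauF n g k i))
          + 2 * ∑ i ∈ Icc v (2*k+1), (x i - tauF n g k i) := by
      unfold ellT
      rw [split3]; ring
    have hpre : 0 ≤ ∑ i ∈ Icc 1 (u-1), x i := Finset.sum_nonneg (fun i _ => hx0 i)
    have harith : - ((en:ℤ) - 4*g4) + (2*(k:ℤ)+1) * (2*(g:ℤ)) ≤ 0 := by
      rw [hgz]
      nlinarith
    rw [key, split1, split2, hdecomp]
    linarith
  unfold hT
  rcases fold_max_cases ((Finset.Icc 1 (2*k+1)).filter (fun t => Odd t)) (ellT n g k x)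
    with hMO | ⟨a, ha, hMO⟩ <;>
  rcases fold_max_cases ((Finset.Icc 1 (2*k+1)).filter (fun t => Even t)) (ellT n g k x)
    with hME | ⟨b, hb, hME⟩
  · rw [hMO, hME]; linarith
  · rw [hMO, hME]
    simp only [Finset.mem_filter, Finset.mem_Icc] at hb
    have := hell_le b hb.1.1 hb.1.2
    linarith
  · rw [hMO, hME]
    simp only [Finset.mem_filter, Finset.mem_Icc] at ha
    have := hell_le a ha.1.1 ha.1.2
    linarith
  · rw [hMO, hME]
    simp only [Finset.mem_filter, Finset.mem_Icc] at ha hb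
    have hab : a ≠ b := by
      intro h
      subst h
      exact (Nat.not_even_iff_odd.mpr ha.2) hb.2
    rcases lt_or_gt_of_ne hab with h | h
    · have := hell_pair a b ha.1.1 h hb.1.2
      linarith
    · have := hell_pair b a hb.1.1 h ha.1.2
      linarith

end S5
section S6
variable {α : Type*} [Fintype α] [DecidableEq α]

lemma part_sum_eq (lo hi : ℕ) (Q : ℕ → Finset α)
    (hdisj : ∀ i ∈ Finset.Icc lo hi, ∀ j ∈ Finset.Icc lo hi, i ≠ j → Disjoint (Q i) (Q j))
    (hcover : ∀ a : α, ∃ i ∈ Finset.Icc lo hi, a ∈ Q i)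
    (S : Finset α) :
    ∑ i ∈ Icc lo hi, ((S ∩ Q i).card : ℤ) = S.card := by
  have hS : S = (Icc lo hi).biUnion (fun i => S ∩ Q i) := by
    ext x
    simp only [Finset.mem_biUnion, Finset.mem_inter]
    constructor
    · intro hx
      obtain ⟨i, hi, hxi⟩ := hcover x
      exact ⟨i, hi, hx, hxi⟩
    · rintro ⟨i, _, hx, _⟩; exact hx
  have hcard : S.card = ∑ i ∈ Icc lo hi, (S ∩ Q i).card := by
    conv_lhs => rw [hS]
    exact Finset.card_biUnion (fun i hi j hj hij =>
      (hdisj i hi j hj hij).mono Finset.inter_subset_right Finset.inter_subset_right)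
  rw [hcard]; push_cast; ring

lemma Qeven_disj (k : ℕ) (hk : 1 ≤ k) (P : ℕ → Finset α)
    (hdisj : ∀ i ∈ Finset.Icc 1 (2 * k + 1), ∀ j ∈ Finset.Icc 1 (2 * k + 1),
        i ≠ j → Disjoint (P i) (P j)) :
    ∀ s ∈ Finset.Icc 1 (k+1), ∀ s' ∈ Finset.Icc 1 (k+1), s ≠ s' →
      Disjoint (QevenF P k s) (QevenF P k s') := by
  have dP : ∀ a b : ℕ, 1 ≤ a → a ≤ 2*k+1 → 1 ≤ b → b ≤ 2*k+1 → a ≠ b → Disjoint (P a) (P b) :=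
    fun a b h1 h2 h3 h4 h5 => hdisj a (by simp; omega) b (by simp; omega) h5
  intro s hs s' hs' hss
  simp only [Finset.mem_Icc] at hs hs'
  unfold QevenF
  by_cases h1 : s = 1
  · rw [if_pos h1, if_neg (by omega)]
    subst h1
    exact Finset.disjoint_union_right.mpr
      ⟨dP 1 (2*s'-2) (by omega) (by omega) (by omega) (by omega) (by omega),
       dP 1 (2*s'-1) (by omega) (by omega) (by omega) (by omega) (by omega)⟩
  · rw [if_neg h1]
    by_cases h2 : s' = 1
    · rw [if_pos h2]
      subst h2
      exact Finset.disjoint_union_left.mpr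
        ⟨dP (2*s-2) 1 (by omega) (by omega) (by omega) (by omega) (by omega),
         dP (2*s-1) 1 (by omega) (by omega) (by omega) (by omega) (by omega)⟩
    · rw [if_neg h2]
      apply Finset.disjoint_union_left.mpr
      constructor <;> apply Finset.disjoint_union_right.mpr
      · exact ⟨dP (2*s-2) (2*s'-2) (by omega) (by omega) (by omega) (by omega) (by omega),
          dP (2*s-2) (2*s'-1) (by omega) (by omega) (by omega) (by omega) (by omega)⟩
      · exact ⟨dP (2*s-1) (2*s'-2) (by omega) (by omega) (by omega) (by omega) (by omega),
          dP (2*s-1) (2*s'-1) (by omega) (by omega) (by omega) (by omega) (by omega)⟩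

lemma Qeven_cover (k : ℕ) (hk : 1 ≤ k) (P : ℕ → Finset α)
    (hcover : ∀ a : α, ∃ i ∈ Finset.Icc 1 (2 * k + 1), a ∈ P i) :
    ∀ a : α, ∃ s ∈ Finset.Icc 1 (k+1), a ∈ QevenF P k s := by
  intro a
  obtain ⟨i, hi, hai⟩ := hcover a
  simp only [Finset.mem_Icc] at hi
  by_cases hi1 : i = 1
  · refine ⟨1, by simp, ?_⟩
    unfold QevenF
    rw [if_pos rfl]
    exact hi1 ▸ hai
  · rcases Nat.even_or_odd i with he | ho
    · obtain ⟨c, hc⟩ := he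
      refine ⟨i/2+1, by simp; omega, ?_⟩
      unfold QevenF
      rw [if_neg (by omega)]
      apply Finset.mem_union_left
      have : 2*(i/2+1)-2 = i := by omega
      rw [this]; exact hai
    · obtain ⟨c, hc⟩ := ho
      refine ⟨(i+1)/2, by simp; omega, ?_⟩
      unfold QevenF
      rw [if_neg (by omega)]
      apply Finset.mem_union_right
      have : 2*((i+1)/2)-1 = i := by omega
      rw [this]; exact hai

lemma sigma_even_sum (n g k en g4 : ℕ) (hk : 1 ≤ k) (hn : n = 2*en) (hg : g = 4*g4) :
    ∑ s ∈ Icc 1 (k+1), sevenF n g k s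
      = (n:ℤ) + (2*(k:ℤ)*((en:ℤ)-4*(g4:ℤ)) + (g4:ℤ)*(2*(k:ℤ)+1)) := by
  rw [sum_Icc_split_one _ (by omega)]
  have h1 : sevenF n g k 1 = (n:ℤ) := by unfold sevenF; simp
  have h2 : ∑ s ∈ Icc (1+1) (k+1), sevenF n g k s
      = ∑ s ∈ Icc 2 (k+1), (tauF n g k (2*s-2) + tauF n g k (2*s-1)) := by
    apply Finset.sum_congr (by norm_num)
    intro s hs
    simp only [Finset.mem_Icc] at hs
    unfold sevenF
    rw [if_neg (by omega)]
  rw [h1, h2, reindex_even (tauF n g k) 2 k le_rfl (by omega)]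
  rw [show 2*2-2 = 2 from rfl, tau_sum2 n g k en g4 hk hn hg]

lemma sigma_even_le_card (n g k en g4 : ℕ) (hk : 1 ≤ k) (hn : n = 2*en) (hg : g = 4*g4)
    (hbig : 10*g4*(2*k+1) ≤ en)
    (P : ℕ → Finset α)
    (hdisj : ∀ i ∈ Finset.Icc 1 (2 * k + 1), ∀ j ∈ Finset.Icc 1 (2 * k + 1),
        i ≠ j → Disjoint (P i) (P j))
    (hcard : ∀ i ∈ Finset.Icc 1 (2 * k + 1), (P i).card = n) :
    ∀ s ∈ Finset.Icc 1 (k+1), sevenF n g k s ≤ ((QevenF P k s).card : ℤ) := by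
  have hbz : 20*((k:ℤ)*(g4:ℤ)) + 10*(g4:ℤ) ≤ (en:ℤ) := by
    have : ((10*g4*(2*k+1):ℕ):ℤ) ≤ ((en:ℕ):ℤ) := by exact_mod_cast hbig
    push_cast at this
    nlinarith [this]
  have hkz : (1:ℤ) ≤ (k:ℤ) := by exact_mod_cast hk
  have hg4z : (0:ℤ) ≤ (g4:ℤ) := Int.natCast_nonneg g4
  have hkg4 : (0:ℤ) ≤ (k:ℤ)*(g4:ℤ) := mul_nonneg (by linarith) hg4z
  have htau_le : ∀ i, tauF n g k i ≤ (en:ℤ) + (g4:ℤ)*(2*(k:ℤ)+1) := by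
    intro i
    rw [tau_eval n g k en g4 hn hg]
    split_ifs <;> nlinarith
  intro s hs
  simp only [Finset.mem_Icc] at hs
  unfold sevenF QevenF
  by_cases h1 : s = 1
  · rw [if_pos h1, if_pos h1, hcard 1 (by simp)]
  · rw [if_neg h1, if_neg h1]
    have hd : Disjoint (P (2*s-2)) (P (2*s-1)) :=
      hdisj (2*s-2) (by simp; omega) (2*s-1) (by simp; omega) (by omega)
    rw [Finset.card_union_of_disjoint hd, hcard (2*s-2) (by simp; omega),
      hcard (2*s-1) (by simp; omega)]
    have := htau_le (2*s-2)
    have := htau_le (2*s-1)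
    have hnz : (n:ℤ) = 2*(en:ℤ) := by exact_mod_cast hn
    push_cast
    nlinarith

lemma indep_even_card_le (n g k en g4 : ℕ) (hk : 1 ≤ k) (hn : n = 2*en) (hg : g = 4*g4)
    (P : ℕ → Finset α)
    (hdisj : ∀ i ∈ Finset.Icc 1 (2 * k + 1), ∀ j ∈ Finset.Icc 1 (2 * k + 1),
        i ≠ j → Disjoint (P i) (P j))
    (hcover : ∀ a : α, ∃ i ∈ Finset.Icc 1 (2 * k + 1), a ∈ P i)
    (I : Finset α) (hI : NIndep (k+1) (QevenF P k) (sevenF n g k) I) :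
    (I.card : ℤ) ≤ (n:ℤ) + (2*(k:ℤ)*((en:ℤ)-4*(g4:ℤ)) + (g4:ℤ)*(2*(k:ℤ)+1)) := by
  have h1 : ∑ s ∈ Icc 1 (k+1), ((I ∩ QevenF P k s).card : ℤ)
      ≤ ∑ s ∈ Icc 1 (k+1), sevenF n g k s := hI 1 (by simp)
  rw [part_sum_eq 1 (k+1) (QevenF P k) (Qeven_disj k hk P hdisj) (Qeven_cover k hk P hcover) I,
    sigma_even_sum n g k en g4 hk hn hg] at h1
  exact h1

lemma base_card_ge (n g k en g4 : ℕ) (hk : 1 ≤ k) (hn : n = 2*en) (hg : g = 4*g4)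
    (hbig : 10*g4*(2*k+1) ≤ en)
    (P : ℕ → Finset α)
    (hdisj : ∀ i ∈ Finset.Icc 1 (2 * k + 1), ∀ j ∈ Finset.Icc 1 (2 * k + 1),
        i ≠ j → Disjoint (P i) (P j))
    (hcover : ∀ a : α, ∃ i ∈ Finset.Icc 1 (2 * k + 1), a ∈ P i)
    (hcard : ∀ i ∈ Finset.Icc 1 (2 * k + 1), (P i).card = n)
    (B : Finset α) (hB : IsNBase (NIndep (k+1) (QevenF P k) (sevenF n g k)) B) :
    (n:ℤ) + (2*(k:ℤ)*((en:ℤ)-4*(g4:ℤ)) + (g4:ℤ)*(2*(k:ℤ)+1)) ≤ (B.card : ℤ) := by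
  classical
  obtain ⟨hBi', hBmax⟩ := hB
  have hBi : ∀ t ∈ Finset.Icc 1 (k+1),
      (∑ s ∈ Finset.Icc t (k+1), ((B ∩ QevenF P k s).card : ℤ))
        ≤ ∑ s ∈ Finset.Icc t (k+1), sevenF n g k s := hBi'
  by_contra hlt
  push_neg at hlt
  have hQdisj := Qeven_disj k hk P hdisj
  have hQcover := Qeven_cover k hk P hcover
  have hsum : ∑ s ∈ Icc 1 (k+1), ((B ∩ QevenF P k s).card : ℤ) = B.card :=
    part_sum_eq 1 (k+1) (QevenF P k) hQdisj hQcover B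
  have htotal : ∑ s ∈ Icc 1 (k+1), ((B ∩ QevenF P k s).card : ℤ)
      < ∑ s ∈ Icc 1 (k+1), sevenF n g k s := by
    rw [hsum, sigma_even_sum n g k en g4 hk hn hg]
    exact hlt
  set Su := (Icc 1 (k+1)).filter
    (fun t => ∑ s ∈ Icc t (k+1), ((B ∩ QevenF P k s).card : ℤ)
      = ∑ s ∈ Icc t (k+1), sevenF n g k s) with hSudef
  have hex : ∃ u, 2 ≤ u ∧ u ≤ k+2
      ∧ (∀ t, 1 ≤ t → t < u →
          ∑ s ∈ Icc t (k+1), ((B ∩ QevenF P k s).card : ℤ) < ∑ s ∈ Icc t (k+1), sevenF n g k s)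
      ∧ (∑ s ∈ Icc 1 (u-1), ((B ∩ QevenF P k s).card : ℤ) < ∑ s ∈ Icc 1 (u-1), sevenF n g k s) := by
    by_cases hne : Su.Nonempty
    · set u := Su.min' hne with hu
      have humem : u ∈ Su := Su.min'_mem hne
      have humem' : u ∈ Icc 1 (k+1) := (Finset.mem_filter.mp humem).1
      have hueq : ∑ s ∈ Icc u (k+1), ((B ∩ QevenF P k s).card : ℤ)
          = ∑ s ∈ Icc u (k+1), sevenF n g k s := (Finset.mem_filter.mp humem).2
      simp only [Finset.mem_Icc] at humem'
      have hstrict : ∀ t, 1 ≤ t → t < u →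
          ∑ s ∈ Icc t (k+1), ((B ∩ QevenF P k s).card : ℤ) < ∑ s ∈ Icc t (k+1), sevenF n g k s := by
        intro t ht1 htu
        have htmem : t ∈ Icc 1 (k+1) := by simp; omega
        have htn : t ∉ Su := fun hc => absurd (Su.min'_le t hc) (by omega)
        have : ¬ (∑ s ∈ Icc t (k+1), ((B ∩ QevenF P k s).card : ℤ)
            = ∑ s ∈ Icc t (k+1), sevenF n g k s) := by
          intro hc
          exact htn (Finset.mem_filter.mpr ⟨htmem, hc⟩)
        exact lt_of_le_of_ne (hBi t htmem) this
      have hu2 : 2 ≤ u := by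
        by_contra hc
        have hu1 : u = 1 := by omega
        rw [hu1] at hueq
        rw [hueq] at htotal
        exact lt_irrefl _ htotal
      refine ⟨u, hu2, by omega, hstrict, ?_⟩
      have hsplit1 : ∑ s ∈ Icc 1 (k+1), ((B ∩ QevenF P k s).card : ℤ)
          = (∑ s ∈ Icc 1 (u-1), ((B ∩ QevenF P k s).card : ℤ))
            + ∑ s ∈ Icc u (k+1), ((B ∩ QevenF P k s).card : ℤ) := by
        have h := sum_Icc_cat (fun s => ((B ∩ QevenF P k s).card : ℤ))
          (a := 1) (b := u-1) (c := k+1) (by omega) (by omega)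
        rw [show u-1+1 = u from by omega] at h
        exact h
      have hsplit2 : ∑ s ∈ Icc 1 (k+1), sevenF n g k s
          = (∑ s ∈ Icc 1 (u-1), sevenF n g k s) + ∑ s ∈ Icc u (k+1), sevenF n g k s := by
        have h := sum_Icc_cat (sevenF n g k) (a := 1) (b := u-1) (c := k+1) (by omega) (by omega)
        rw [show u-1+1 = u from by omega] at h
        exact h
      rw [hsplit1, hsplit2] at htotal
      linarith [htotal, hueq]
    · refine ⟨k+2, by omega, le_rfl, ?_, ?_⟩
      · intro t ht1 htu
        have htmem : t ∈ Icc 1 (k+1) := by simp; omega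
        have htn : t ∉ Su := by rw [hSudef]; intro hc; exact hne ⟨t, hc⟩
        have : ¬ (∑ s ∈ Icc t (k+1), ((B ∩ QevenF P k s).card : ℤ)
            = ∑ s ∈ Icc t (k+1), sevenF n g k s) := by
          intro hc
          exact htn (Finset.mem_filter.mpr ⟨htmem, hc⟩)
        exact lt_of_le_of_ne (hBi t htmem) this
      · rw [show k+2-1 = k+1 from by omega]
        exact htotal
  obtain ⟨u, hu2, huM, hstrict, hprefix⟩ := hex
  have hQle : ∀ s ∈ Icc 1 (u-1), sevenF n g k s ≤ ((QevenF P k s).card : ℤ) := by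
    intro s hs
    simp only [Finset.mem_Icc] at hs
    exact sigma_even_le_card n g k en g4 hk hn hg hbig P hdisj hcard s (by simp; omega)
  have hlt2 : ∑ s ∈ Icc 1 (u-1), ((B ∩ QevenF P k s).card : ℤ)
      < ∑ s ∈ Icc 1 (u-1), ((QevenF P k s).card : ℤ) :=
    lt_of_lt_of_le hprefix (Finset.sum_le_sum hQle)
  obtain ⟨s0, hs0mem, hs0⟩ := Finset.exists_lt_of_sum_lt hlt2
  have hs0mem2 : 1 ≤ s0 ∧ s0 ≤ u-1 := by simpa using hs0mem
  have hs0mem' : s0 ∈ Icc 1 (k+1) := by simp; omega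
  have hcardlt : (B ∩ QevenF P k s0).card < (QevenF P k s0).card := by exact_mod_cast hs0
  have hexe : ∃ e, e ∈ QevenF P k s0 ∧ e ∉ B := by
    by_contra h
    push_neg at h
    have hsub : QevenF P k s0 ⊆ B ∩ QevenF P k s0 :=
      fun e he => Finset.mem_inter.mpr ⟨h e he, he⟩
    have := Finset.card_le_card hsub
    omega
  obtain ⟨e, heQ, heB⟩ := hexe
  have hkey : ∀ s' ∈ Icc 1 (k+1), ((insert e B ∩ QevenF P k s').card : ℤ)
      = ((B ∩ QevenF P k s').card : ℤ) + (if s' = s0 then 1 else 0) := by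
    intro s' hs'
    by_cases h : s' = s0
    · subst h
      rw [Finset.insert_inter_of_mem heQ,
        Finset.card_insert_of_notMem (fun hc => heB (Finset.mem_inter.mp hc).1), if_pos rfl]
      push_cast; ring
    · rw [Finset.insert_inter_of_notMem
        (fun hc => (Finset.disjoint_left.mp (hQdisj s' hs' s0 hs0mem' h) hc) heQ), if_neg h]
      ring
  have hB'i : NIndep (k+1) (QevenF P k) (sevenF n g k) (insert e B) := by
    intro t ht
    have ht' : 1 ≤ t ∧ t ≤ k+1 := by simpa using ht
    have hrw : ∑ s ∈ Icc t (k+1), ((insert e B ∩ QevenF P k s).card : ℤ)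
        = (∑ s ∈ Icc t (k+1), ((B ∩ QevenF P k s).card : ℤ))
          + (if s0 ∈ Icc t (k+1) then (1:ℤ) else 0) := by
      rw [Finset.sum_congr rfl (fun s hs => hkey s (by simp at hs ⊢; omega)),
        Finset.sum_add_distrib, Finset.sum_ite_eq' (Icc t (k+1)) s0 (fun _ => (1:ℤ))]
    rw [hrw]
    by_cases hts : s0 ∈ Icc t (k+1)
    · rw [if_pos hts]
      simp only [Finset.mem_Icc] at hts
      have htlt : t < u := by omega
      have hst := hstrict t ht'.1 htlt
      linarith [Int.add_one_le_iff.mpr hst]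
    · rw [if_neg hts]
      simpa using hBi t ht
  have heqB := hBmax (insert e B) hB'i (Finset.subset_insert e B)
  exact heB (by rw [← heqB]; exact Finset.mem_insert_self e B)

lemma nrank_eval {pred : Finset α → Prop} (W S : Finset α) (hWS : W ⊆ S) (hW : pred W)
    (hub : ∀ I : Finset α, I ⊆ S → pred I → I.card ≤ W.card) :
    nrank pred S = W.card := by
  unfold nrank
  apply IsGreatest.csSup_eq
  constructor
  · exact ⟨W, hWS, hW, rfl⟩
  · rintro c ⟨I, hIS, hI, rfl⟩
    exact hub I hIS hI

end S6

/-- The maximum cardinality of a common independent set of `M_odd` and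
the dual matroid `M_even*` equals `C + min_{S ⊆ U} f(S)`, where
`C = |U| − rk_{M_even}(U)` and `f(S) = h(x)` for the signature `x` of `S`. -/
theorem matroid_intersection_Modd_MevenDual
    {α : Type*} [Fintype α] [DecidableEq α]
    (n g k : ℕ) (hk : 1 ≤ k) (hn : 0 < n) (hn2 : 2 ∣ n) (hg : 0 < g) (hg4 : 4 ∣ g)
    (hgrn : 5 * g * (2 * k + 1) ≤ n)
    (P : ℕ → Finset α)
    (hdisj : ∀ i ∈ Finset.Icc 1 (2 * k + 1), ∀ j ∈ Finset.Icc 1 (2 * k + 1),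
        i ≠ j → Disjoint (P i) (P j))
    (hcover : ∀ a : α, ∃ i ∈ Finset.Icc 1 (2 * k + 1), a ∈ P i)
    (hcard : ∀ i ∈ Finset.Icc 1 (2 * k + 1), (P i).card = n) :
    ((sSup {c : ℕ | ∃ I : Finset α,
        NIndep (k + 1) (QoddF P k) (soddF n g k) I ∧
        (∃ B : Finset α, IsNBase (NIndep (k + 1) (QevenF P k) (sevenF n g k)) B ∧
          B ⊆ Finset.univ \ I) ∧
        I.card = c} : ℕ) : ℤ)
      = ((Fintype.card α : ℤ)
          - (nrank (NIndep (k + 1) (QevenF P k) (sevenF n g k)) Finset.univ : ℤ))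
        + Finset.inf' Finset.univ.powerset (Finset.powerset_nonempty _)
            (fun S => hT n g k (sigF P S)) := by
  classical
  obtain ⟨en, hen⟩ := hn2
  obtain ⟨g4, hg4'⟩ := hg4
  -- arithmetic preliminaries
  have hAfact : ∀ A : ℕ, A = g4*(2*k+1) → (20*A ≤ 2*en ∧ 3*g4 ≤ A) := by
    intro A hA
    constructor
    · calc 20*A = 5*(4*g4)*(2*k+1) := by rw [hA]; ring
      _ = 5*g*(2*k+1) := by rw [hg4']
      _ ≤ n := hgrn
      _ = 2*en := hen
    · rw [hA]
      calc 3*g4 ≤ g4*3 := by omega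
      _ ≤ g4*(2*k+1) := Nat.mul_le_mul_left g4 (by omega)
  obtain ⟨hA1, hA2⟩ := hAfact (g4*(2*k+1)) rfl
  have hbig : 10*g4*(2*k+1) ≤ en := by
    have : 10*g4*(2*k+1) = 10*(g4*(2*k+1)) := by ring
    omega
  have h4g4en : 4*g4 ≤ en := by omega
  have hgn : 2*g ≤ n := by
    rw [hg4', hen]
    omega
  set dn := g4*(2*k+1) with hdn_def
  have hdnn : dn ≤ n := by rw [hen]; omega
  have hdnz : (dn:ℤ) = (g4:ℤ)*(2*(k:ℤ)+1) := by rw [hdn_def]; push_cast; ring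
  have htau0 : ∀ i, 0 ≤ tauF n g k i := by
    intro i
    rw [tau_eval n g k en g4 hen hg4']
    have h1 : (4*(g4:ℤ)) ≤ (en:ℤ) := by exact_mod_cast h4g4en
    have h2 : (0:ℤ) ≤ (g4:ℤ)*(2*(k:ℤ)+1) := by positivity
    split_ifs <;> linarith
  -- construct the optimal common independent set
  set y := yN n g k dn with hy
  have hyle : ∀ i ∈ Finset.Icc 1 (2*k+1), y i ≤ n := fun i _ => y_le n g k dn hgn hdnn i
  obtain ⟨I, hIsig⟩ := exists_with_sig k n P hdisj hcard y hyle
  set B := Finset.univ \ I with hBdef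
  have hBsub : B ⊆ Finset.univ \ I := by rw [hBdef]
  have hBsig : ∀ i ∈ Finset.Icc 1 (2*k+1), ((B ∩ P i).card : ℤ) = (n:ℤ) - ((y i : ℕ) : ℤ) := by
    intro i hi
    rw [hBdef, compl_inter_card n k P hcard I i hi, hIsig i hi]
  have hIodd : NIndep (k+1) (QoddF P k) (soddF n g k) I := by
    rw [nindep_odd_iff n g k P hdisj I]
    intro t ht
    have ht' : 1 ≤ t ∧ t ≤ k+1 := by simpa using ht
    have hrw : ∑ i ∈ Icc (2*t-1) (2*k+1), ((I ∩ P i).card:ℤ)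
        = ∑ i ∈ Icc (2*t-1) (2*k+1), ((y i : ℕ):ℤ) :=
      Finset.sum_congr rfl (fun i hi => by rw [hIsig i (by simp at hi ⊢; omega)])
    rw [hrw]
    exact y_odd_ineq n g k en g4 dn hk hen hg4' hdn_def hbig t ht
  have hz := z_sum n g k en g4 dn hk hdnn hen hg4' hdnz
  have hB1 : ((B ∩ P 1).card:ℤ) = (n:ℤ) := by
    rw [hBsig 1 (by simp)]
    have : y 1 = 0 := by rw [hy]; unfold yN; rw [if_pos rfl]
    rw [this]
    simp
  have hB2 : ∑ i ∈ Icc 2 (2*k+1), ((B ∩ P i).card:ℤ) = ∑ i ∈ Icc 2 (2*k+1), tauF n g k i := by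
    have hr : ∑ i ∈ Icc 2 (2*k+1), ((B∩P i).card:ℤ)
        = ∑ i ∈ Icc 2 (2*k+1), ((n:ℤ) - ((y i : ℕ):ℤ)) :=
      Finset.sum_congr rfl (fun i hi => hBsig i (by simp at hi ⊢; omega))
    have hz2 := hz (k-1) (by omega)
    rw [show 2*(k-(k-1)) = 2 from by omega] at hz2
    rw [hr]
    exact hz2
  have hBeven : NIndep (k+1) (QevenF P k) (sevenF n g k) B := by
    rw [nindep_even_iff n g k hk P hdisj B]
    constructor
    · rw [hB1, hB2]
    · intro t ht
      simp only [Finset.mem_Icc] at ht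
      have hr : ∑ i ∈ Icc (2*t-2) (2*k+1), ((B∩P i).card:ℤ)
          = ∑ i ∈ Icc (2*t-2) (2*k+1), ((n:ℤ) - ((y i : ℕ):ℤ)) :=
        Finset.sum_congr rfl (fun i hi => hBsig i (by simp at hi ⊢; omega))
      have hz2 := hz (k+1-t) (by omega)
      rw [show 2*(k-(k+1-t)) = 2*t-2 from by omega] at hz2
      rw [hr]
      exact le_of_eq hz2
  set RZ : ℤ := (n:ℤ) + (2*(k:ℤ)*((en:ℤ)-4*(g4:ℤ)) + (g4:ℤ)*(2*(k:ℤ)+1)) with hRZ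
  have hBcard : (B.card:ℤ) = RZ := by
    rw [← sig_sum_eq k n P hdisj hcover B, sum_Icc_split_one _ (by omega)]
    rw [show (1:ℕ)+1 = 2 from rfl, hB1, hB2, tau_sum2 n g k en g4 hk hen hg4', hRZ]
  have hIle : I.card ≤ Fintype.card α := by
    rw [← Finset.card_univ]
    exact Finset.card_le_card (Finset.subset_univ I)
  have hBcard' : (B.card:ℤ) = (Fintype.card α:ℤ) - (I.card:ℤ) := by
    rw [hBdef, Finset.card_sdiff_of_subset (Finset.subset_univ I), Finset.card_univ,
      Nat.cast_sub hIle]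
  have hIcard : (I.card:ℤ) = (Fintype.card α:ℤ) - RZ := by
    rw [← hBcard, hBcard']
    ring
  have hBbase : IsNBase (NIndep (k+1) (QevenF P k) (sevenF n g k)) B := by
    refine ⟨hBeven, fun B' hB' hsub => ?_⟩
    have h1 : (B'.card:ℤ) ≤ RZ := by
      rw [hRZ]
      exact indep_even_card_le n g k en g4 hk hen hg4' P hdisj hcover B' hB'
    have h2 : B'.card ≤ B.card := by
      have : (B'.card:ℤ) ≤ (B.card:ℤ) := by rw [hBcard]; exact h1
      exact_mod_cast this
    exact (Finset.eq_of_subset_of_card_le hsub h2).symm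
  have hnrank : nrank (NIndep (k+1) (QevenF P k) (sevenF n g k)) Finset.univ = B.card := by
    apply nrank_eval B Finset.univ (Finset.subset_univ B) hBeven
    intro I' _ hI'
    have h1 : (I'.card:ℤ) ≤ RZ := by
      rw [hRZ]
      exact indep_even_card_le n g k en g4 hk hen hg4' P hdisj hcover I' hI'
    have : (I'.card:ℤ) ≤ (B.card:ℤ) := by rw [hBcard]; exact h1
    exact_mod_cast this
  have hinf : Finset.inf' Finset.univ.powerset (Finset.powerset_nonempty _)
      (fun S => hT n g k (sigF P S)) = 0 := by
    apply le_antisymm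
    · have h0 : hT n g k (sigF P (∅ : Finset α)) = 0 := by
        have hsig0 : ∀ j, sigF P (∅ : Finset α) j = 0 := fun j => by simp [sigF]
        have hell : ∀ u ∈ Finset.Icc 1 (2*k+1), ellT n g k (sigF P (∅ : Finset α)) u ≤ 0 := by
          intro u hu
          unfold ellT
          apply Finset.sum_nonpos
          intro i hi
          rw [hsig0 i]
          have := htau0 i
          linarith
        unfold hT
        have hf1 : ((Finset.Icc 1 (2*k+1)).filter (fun t => Odd t)).fold max 0
            (ellT n g k (sigF P (∅ : Finset α))) = 0 := by
          apply le_antisymm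
          · rw [Finset.fold_max_le]
            exact ⟨le_rfl, fun x hx => hell x (Finset.mem_filter.mp hx).1⟩
          · exact fold_max_nonneg _ _
        have hf2 : ((Finset.Icc 1 (2*k+1)).filter (fun t => Even t)).fold max 0
            (ellT n g k (sigF P (∅ : Finset α))) = 0 := by
          apply le_antisymm
          · rw [Finset.fold_max_le]
            exact ⟨le_rfl, fun x hx => hell x (Finset.mem_filter.mp hx).1⟩
          · exact fold_max_nonneg _ _
        rw [hf1, hf2, Finset.sum_eq_zero (fun i _ => hsig0 i)]
        ring
      calc Finset.inf' Finset.univ.powerset (Finset.powerset_nonempty _)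
            (fun S => hT n g k (sigF P S)) ≤ hT n g k (sigF P (∅ : Finset α)) :=
          Finset.inf'_le _ (Finset.empty_mem_powerset _)
      _ = 0 := h0
    · apply Finset.le_inf'
      intro S _
      apply hT_nonneg_of n g k en g4 hk hen hg4' hbig
      · intro i
        exact Int.natCast_nonneg _
      · intro i hi
        unfold sigF
        have h1 : (S ∩ P i).card ≤ (P i).card := Finset.card_le_card Finset.inter_subset_right
        rw [hcard i hi] at h1
        exact_mod_cast h1
  have hset : sSup {c : ℕ | ∃ I : Finset α,
      NIndep (k + 1) (QoddF P k) (soddF n g k) I ∧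
      (∃ B : Finset α, IsNBase (NIndep (k + 1) (QevenF P k) (sevenF n g k)) B ∧
        B ⊆ Finset.univ \ I) ∧
      I.card = c} = I.card := by
    apply IsGreatest.csSup_eq
    constructor
    · exact ⟨I, hIodd, ⟨B, hBbase, hBsub⟩, rfl⟩
    · rintro c ⟨I', hI'odd, ⟨B', hB'base, hB'sub⟩, rfl⟩
      have h1 : RZ ≤ (B'.card:ℤ) := by
        rw [hRZ]
        exact base_card_ge n g k en g4 hk hen hg4' hbig P hdisj hcover hcard B' hB'base
      have h2 : B'.card ≤ (Finset.univ \ I').card := Finset.card_le_card hB'sub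
      have hI'le : I'.card ≤ Fintype.card α := by
        rw [← Finset.card_univ]
        exact Finset.card_le_card (Finset.subset_univ I')
      have h3 : ((Finset.univ \ I').card:ℤ) = (Fintype.card α:ℤ) - (I'.card:ℤ) := by
        rw [Finset.card_sdiff_of_subset (Finset.subset_univ I'), Finset.card_univ, Nat.cast_sub hI'le]
      have h2z : (B'.card:ℤ) ≤ ((Finset.univ \ I').card:ℤ) := by exact_mod_cast h2
      have h5 : (I'.card:ℤ) ≤ (I.card:ℤ) := by
        rw [hIcard]
        rw [h3] at h2z
        linarith
      exact_mod_cast h5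
  rw [hset, hnrank, hinf]
  rw [hIcard, hBcard]
  ring
end
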